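/- arXiv:1910.02476 — 10 statements merged into one kernel-verified Lean document; each statement's English description precedes it below -/
import Mathlib

section
/- Let X be a T1 topological space and 𝒜,ℬ ⊆ ℘(X). Then every member of 𝒜 is contained in some member of ℬ if and only if 𝒪(X,ℬ) ⊆ 𝒪(X,𝒜). -/
open Set

/-- For a T1 space `X` and collections `𝒜, ℬ ⊆ ℘(X)`: every member of `𝒜`
is contained in some member of `ℬ` if and only if `𝒪(X,ℬ) ⊆ 𝒪(X,𝒜)`, where `𝒪(X,𝒞)` is
the collection of families of open sets in which every member of `𝒞` is contained in
some member of the family. -/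
theorem stmt5 {X : Type*} [TopologicalSpace X] [T1Space X] (𝒜 ℬ : Set (Set X)) :
    (∀ A ∈ 𝒜, ∃ B ∈ ℬ, A ⊆ B) ↔
      ∀ 𝒰 : Set (Set X), (∀ U ∈ 𝒰, IsOpen U) →
        (∀ B ∈ ℬ, ∃ U ∈ 𝒰, B ⊆ U) → (∀ A ∈ 𝒜, ∃ U ∈ 𝒰, A ⊆ U) := by
  constructor
  · intro h 𝒰 _ h𝒰 A hA
    obtain ⟨B, hB, hAB⟩ := h A hA
    obtain ⟨U, hU, hBU⟩ := h𝒰 B hB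
    exact ⟨U, hU, hAB.trans hBU⟩
  · intro h A hA
    by_contra hc
    push_neg at hc
    rcases eq_empty_or_nonempty A with rfl | ⟨a, ha⟩
    · rcases ℬ.eq_empty_or_nonempty with rfl | ⟨B, hB⟩
      · obtain ⟨U, hU, -⟩ := h ∅ (by simp) (by simp) ∅ hA
        exact hU
      · exact hc B hB (empty_subset B)
    · -- for each B ∈ ℬ pick a point of A not in B
      have hx : ∀ B ∈ ℬ, ∃ x ∈ A, x ∉ B := by
        intro B hB
        by_contra hb
        push_neg at hb
        exact hc B hB hb
      set 𝒰 : Set (Set X) := (fun x : X => ({x}ᶜ : Set X)) '' A with h𝒰def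
      obtain ⟨U, hU, hAU⟩ := h 𝒰
        (by rintro U ⟨x, -, rfl⟩; exact isOpen_compl_singleton)
        (by
          intro B hB
          obtain ⟨x, hxA, hxB⟩ := hx B hB
          exact ⟨{x}ᶜ, ⟨x, hxA, rfl⟩, fun y hy hxy => hxB (hxy ▸ hy)⟩)
        A hA
      obtain ⟨x, hxA, rfl⟩ := hU
      exact hAU hxA rfl
end

section
/- Let 𝒜 and ℬ be collections of sets, and suppose 𝒜 is a filter base: for all A₁,A₂ ∈ 𝒜 there is A₃ ∈ 𝒜 with A₃ ⊆ A₁ ∩ A₂. Let ℬ_Γ = {B ∈ ℬ : every infinite subset of B belongs to ℬ}. Then player One has a winning strategy in G_1(𝒜, ¬ℬ) if and only if player One has a winning strategy in G_1(𝒜, ¬ℬ_Γ). -/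
/-- Player One has a strategy in the single selection game on the collection `𝒜`
guaranteeing that the set of Two's selections lands in the collection `T`.
(This says One has a winning strategy in `G₁(𝒜, ¬T)`, where Two's picks in round `n`
come from One's move `σ ⟨x_0,…,x_{n-1}⟩ ∈ 𝒜`.) -/
def OneWinsInto {α : Type*} (𝒜 T : Set (Set α)) : Prop :=
  ∃ σ : List α → Set α, (∀ l : List α, σ l ∈ 𝒜) ∧
    ∀ x : ℕ → α, (∀ n : ℕ, x n ∈ σ (List.ofFn fun i : Fin n => x i)) →
      Set.range x ∈ T

/-- A strictly increasing selection of indices gives a sublist of `ofFn`. -/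
lemma ofFn_sublist_aux {α : Type*} (x : ℕ → α) (f : ℕ → ℕ) (hf : StrictMono f) :
    ∀ n k, (∀ i < k, f i < n) →
      (List.ofFn fun i : Fin k => x (f i)).Sublist (List.ofFn fun i : Fin n => x i) := by
  intro n
  induction n with
  | zero =>
    intro k hk
    obtain rfl : k = 0 := by
      by_contra h
      exact Nat.not_lt_zero _ (hk 0 (Nat.pos_of_ne_zero h))
    simp
  | succ n ih =>
    intro k hk
    match k with
    | 0 => simp
    | j + 1 =>
      have hsmall : (List.ofFn fun i : Fin (j+1) => x (f i)) =
          (List.ofFn fun i : Fin j => x (f i)).concat (x (f j)) := by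
        rw [List.ofFn_succ']
        simp
      have hbig : (List.ofFn fun i : Fin (n+1) => x i) =
          (List.ofFn fun i : Fin n => x i).concat (x n) := by
        rw [List.ofFn_succ']
        simp
      have hfj : f j ≤ n := Nat.lt_succ_iff.mp (hk j (Nat.lt_succ_self j))
      rcases eq_or_lt_of_le hfj with heq | hlt
      · -- f j = n : the last elements match
        rw [hsmall, hbig, heq, List.concat_eq_append, List.concat_eq_append]
        exact List.Sublist.append (ih j fun i hi => heq ▸ hf (hi.trans_le (le_refl j))) (List.Sublist.refl _)
      · -- f j < n : everything fits in the first part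
        have h' : ∀ i < j + 1, f i < n := fun i hi =>
          lt_of_le_of_lt (hf.monotone (Nat.lt_succ_iff.mp hi)) hlt
        rw [hbig, List.concat_eq_append]
        exact (ih (j+1) h').trans (List.sublist_append_left _ _)

/-- If `𝒜` is a filter base, then One has a winning strategy in
`G₁(𝒜, ¬ℬ)` iff One has a winning strategy in `G₁(𝒜, ¬ℬ_Γ)`, where
`ℬ_Γ = {B ∈ ℬ : every infinite subset of B belongs to ℬ}`. -/
theorem stmt7 {α : Type*} (𝒜 ℬ : Set (Set α))
    (hfb : ∀ A₁ ∈ 𝒜, ∀ A₂ ∈ 𝒜, ∃ A₃ ∈ 𝒜, A₃ ⊆ A₁ ∩ A₂) :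
    OneWinsInto 𝒜 ℬ ↔
      OneWinsInto 𝒜 {B ∈ ℬ | ∀ B' ⊆ B, B'.Infinite → B' ∈ ℬ} := by
  constructor
  · rintro ⟨σ, hσA, hσW⟩
    -- intersect σ over all sublists of the history
    have aux : ∀ L : List (List α), ∃ A ∈ 𝒜, ∀ l' ∈ L, A ⊆ σ l' := by
      intro L
      induction L with
      | nil => exact ⟨σ [], hσA [], by simp⟩
      | cons b L ih =>
        obtain ⟨A, hA, hAs⟩ := ih
        obtain ⟨C, hC, hCs⟩ := hfb (σ b) (hσA b) A hA
        refine ⟨C, hC, ?_⟩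
        intro l' hl'
        rcases List.mem_cons.mp hl' with rfl | h
        · exact hCs.trans Set.inter_subset_left
        · exact (hCs.trans Set.inter_subset_right).trans (hAs _ h)
    have key : ∀ l : List α, ∃ A ∈ 𝒜, ∀ l', l'.Sublist l → A ⊆ σ l' := by
      intro l
      obtain ⟨A, hA, hs⟩ := aux l.sublists
      exact ⟨A, hA, fun l' h => hs l' (List.mem_sublists.2 h)⟩
    choose τ hτA hτs using key
    refine ⟨τ, hτA, ?_⟩
    intro x hx
    -- x is also a run compatible with σ
    have hxσ : ∀ n : ℕ, x n ∈ σ (List.ofFn fun i : Fin n => x i) := fun n =>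
      hτs _ _ (List.Sublist.refl _) (hx n)
    classical
    refine ⟨hσW x hxσ, ?_⟩
    intro B' hB' hB'inf
    -- first-occurrence indices of elements of B'
    set S : Set ℕ := {n | x n ∈ B' ∧ ∀ m < n, x m ≠ x n} with hS
    have hsub : B' ⊆ x '' S := by
      intro b hb
      obtain ⟨m, hm⟩ := hB' hb
      have hex : ∃ m, x m = b := ⟨m, hm⟩
      refine ⟨Nat.find hex, ⟨?_, ?_⟩, Nat.find_spec hex⟩
      · rw [Nat.find_spec hex]; exact hb
      · intro m' hm' hcontra
        exact Nat.find_min hex hm' (hcontra.trans (Nat.find_spec hex))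
    have hSinf : {n | n ∈ S}.Infinite := by
      simp only [Set.setOf_mem_eq]
      intro hfin
      exact hB'inf (Set.Finite.subset (hfin.image x) hsub)
    classical
    set g : ℕ → ℕ := Nat.nth (· ∈ S) with hg
    have hgmono : StrictMono g := fun a b h => (Nat.nth_lt_nth hSinf).2 h
    set y : ℕ → α := fun k => x (g k) with hy
    have hyσ : ∀ k : ℕ, y k ∈ σ (List.ofFn fun i : Fin k => y i) := by
      intro k
      have h1 : x (g k) ∈ τ (List.ofFn fun i : Fin (g k) => x i) := hx (g k)
      have h2 : (List.ofFn fun i : Fin k => y i).Sublist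
          (List.ofFn fun i : Fin (g k) => x i) :=
        ofFn_sublist_aux x g hgmono (g k) k (fun i hi => hgmono hi)
      exact hτs _ _ h2 h1
    have hrange : Set.range y = B' := by
      apply Set.Subset.antisymm
      · rintro _ ⟨k, rfl⟩
        exact (Nat.nth_mem_of_infinite hSinf k).1
      · intro b hb
        obtain ⟨n, hnS, hnb⟩ := hsub hb
        refine ⟨Nat.count (· ∈ S) n, ?_⟩
        simp only [hy, hg, Nat.nth_count hnS, hnb]
    have := hσW y hyσ
    rwa [hrange] at this
  · rintro ⟨σ, hσA, hσW⟩
    exact ⟨σ, hσA, fun x hx => (hσW x hx).1⟩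
end

section
/- Let X be a T1 topological space, let 𝒜 ⊆ ℘(X) be an ideal-base consisting of proper subsets of X with ⋃𝒜 = X, and let ℬ ⊆ ℘(X) satisfy ⋃ℬ = X. In the generalized point-open game, in round n One picks A_n ∈ 𝒜 and Two responds with an open set U_n ⊆ X with A_n ⊆ U_n and U_n ≠ X. Then: (a) One has a strategy guaranteeing that every B ∈ ℬ is contained in some U_n if and only if One has a strategy guaranteeing that the set 𝒰 = {U_n : n ∈ ω} is infinite and for every B ∈ ℬ the set {U ∈ 𝒰 : B ⊄ U} is finite; (b) the same equivalence holds for predetermined strategies of One (strategies depending only on the round number). -/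
open Set

/-- `𝒜` is an ideal-base: any two members have their union contained in a third member. -/
def IdealBase {X : Type*} (𝒜 : Set (Set X)) : Prop :=
  ∀ A₁ ∈ 𝒜, ∀ A₂ ∈ 𝒜, ∃ A₃ ∈ 𝒜, A₁ ∪ A₂ ⊆ A₃

/-- A run of the generalized point-open game compatible with One's strategy
`σ : List (Set X) → Set X` (taking Two's previous responses to One's next move):
Two's responses `U n` are open, contain One's move, and are proper. -/
def POLegalRun {X : Type*} [TopologicalSpace X] (σ : List (Set X) → Set X)
    (U : ℕ → Set X) : Prop :=
  ∀ n : ℕ, IsOpen (U n) ∧ σ (List.ofFn fun i : Fin n => U i) ⊆ U n ∧ U n ≠ univ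

/-!
If One has a strategy `σ` forcing a cover of `ℬ`, let One answer each position with a member of
`𝒜` containing `σ`'s answers to all its sub-positions; there are finitely many, and `𝒜` is an
ideal-base. Then every subsequence of a run against the new strategy is a run against `σ`, hence
covers `ℬ`. So each `B ∈ ℬ` lies in all but finitely many `U n`, and since every `U n` is proper
the `U n` take infinitely many values. For predetermined strategies, sub-positions become earlier
rounds.
-/

namespace IdealBase

variable {X : Type*} {𝒜 : Set (Set X)}

theorem exists_sUnion_subset (h𝒜 : IdealBase 𝒜) (hne : 𝒜.Nonempty) {s : Set (Set X)}
    (hs : s.Finite) (hs𝒜 : s ⊆ 𝒜) : ∃ A ∈ 𝒜, ⋃₀ s ⊆ A := by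
  induction s, hs using Set.Finite.induction_on with
  | empty =>
    obtain ⟨A, hA⟩ := hne
    exact ⟨A, hA, by simp⟩
  | @insert B s _ _ ih =>
    obtain ⟨A, hA, hsA⟩ := ih ((subset_insert B s).trans hs𝒜)
    obtain ⟨C, hC, hBAC⟩ := h𝒜 B (hs𝒜 (mem_insert B s)) A hA
    exact ⟨C, hC, sUnion_insert B s ▸ (union_subset_union_right B hsA).trans hBAC⟩

theorem exists_forall_rel_subset (h𝒜 : IdealBase 𝒜) {ι : Type*} {r : ι → ι → Prop}
    (hr : ∀ i, {j | r j i}.Finite) {f : ι → Set X} (hf : ∀ i, f i ∈ 𝒜) :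
    ∃ g : ι → Set X, (∀ i, g i ∈ 𝒜) ∧ ∀ j i, r j i → f j ⊆ g i := by
  have (i : ι) : ∃ A ∈ 𝒜, ⋃₀ (f '' {j | r j i}) ⊆ A :=
    h𝒜.exists_sUnion_subset ⟨f i, hf i⟩ ((hr i).image f) (image_subset_iff.2 fun j _ => hf j)
  choose g hg𝒜 hfg using this
  refine ⟨g, hg𝒜, fun j i hji => ?_⟩
  exact (subset_sUnion_of_mem (mem_image_of_mem f (show j ∈ {j | r j i} from hji))).trans (hfg i)

end IdealBase

theorem List.ofFn_comp_sublist_of_strictMono {α : Type*} (u : ℕ → α) {e : ℕ → ℕ}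
    (he : StrictMono e) (k : ℕ) :
    (List.ofFn fun i : Fin k => u (e i)).Sublist (List.ofFn fun i : Fin (e k) => u i) := by
  refine List.sublist_iff_exists_orderEmbedding_getElem?_eq.2
    ⟨OrderEmbedding.ofStrictMono e he, fun i => ?_⟩
  simp [List.getElem?_ofFn, he.lt_iff_lt]

section Runs

variable {X : Type*} [TopologicalSpace X]

theorem POLegalRun.comp_strictMono {σ τ : List (Set X) → Set X}
    (hστ : ∀ l' l, List.Sublist l' l → σ l' ⊆ τ l) {U : ℕ → Set X} (hU : POLegalRun τ U) {e : ℕ → ℕ}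
    (he : StrictMono e) : POLegalRun σ (U ∘ e) := fun k =>
  ⟨(hU (e k)).1, (hστ _ _ (List.ofFn_comp_sublist_of_strictMono U he k)).trans (hU (e k)).2.1,
    (hU (e k)).2.2⟩

theorem poLegalRun_comp_length_iff {p : ℕ → Set X} {U : ℕ → Set X} :
    POLegalRun (p ∘ List.length) U ↔ ∀ n, IsOpen (U n) ∧ p n ⊆ U n ∧ U n ≠ univ := by
  simp [POLegalRun]

end Runs

section Subsequences

variable {X : Type*} {ℬ : Set (Set X)} {U : ℕ → Set X}

theorem finite_setOf_not_subset_of_forall_strictMono {B : Set X}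
    (h : ∀ e : ℕ → ℕ, StrictMono e → ∃ k, B ⊆ U (e k)) : {n | ¬ B ⊆ U n}.Finite := by
  by_contra hinf
  obtain ⟨k, hk⟩ := h _ (Nat.nth_strictMono hinf)
  exact Nat.nth_mem_of_infinite hinf k hk

/-- Each `U n` misses some `B ∈ ℬ`, so a finite range would write `ℕ` as a finite union of
finite sets. -/
theorem infinite_range_and_finite_of_forall_strictMono (hℬ : ⋃₀ ℬ = univ)
    (hU : ∀ n, U n ≠ univ) (h : ∀ e : ℕ → ℕ, StrictMono e → ∀ B ∈ ℬ, ∃ k, B ⊆ U (e k)) :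
    (range U).Infinite ∧ ∀ B ∈ ℬ, {V ∈ range U | ¬ B ⊆ V}.Finite := by
  have hfin (B : Set X) (hB : B ∈ ℬ) : {n | ¬ B ⊆ U n}.Finite :=
    finite_setOf_not_subset_of_forall_strictMono fun e he => h e he B hB
  have hmiss (V : Set X) (hV : V ∈ range U) : ∃ B ∈ ℬ, ¬ B ⊆ V := by
    obtain ⟨n, rfl⟩ := hV
    by_contra! hcov
    exact hU n (univ_subset_iff.1 (hℬ ▸ sUnion_subset hcov))
  choose! miss hmissℬ hmiss using hmiss
  refine ⟨fun hrange => infinite_univ ((hrange.biUnion fun V hV => hfin _ (hmissℬ V hV)).subset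
    fun n _ => mem_biUnion (mem_range_self n) (hmiss _ (mem_range_self n))), fun B hB => ?_⟩
  refine ((hfin B hB).image U).subset ?_
  rintro _ ⟨⟨n, rfl⟩, hn⟩
  exact mem_image_of_mem U hn

theorem exists_subset_of_infinite_range {B : Set X} (hU : (range U).Infinite)
    (hB : {V ∈ range U | ¬ B ⊆ V}.Finite) : ∃ n, B ⊆ U n := by
  obtain ⟨_, ⟨n, rfl⟩, hn⟩ := (hU.sdiff hB).nonempty
  exact ⟨n, by_contra fun h => hn ⟨mem_range_self n, h⟩⟩

end Subsequences

theorem POLegalRun.infinite_range_and_finite {X : Type*} [TopologicalSpace X]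
    {ℬ : Set (Set X)} (hℬ : ⋃₀ ℬ = univ) {σ τ : List (Set X) → Set X}
    (hσ : ∀ U, POLegalRun σ U → ∀ B ∈ ℬ, ∃ n, B ⊆ U n)
    (hστ : ∀ l' l, List.Sublist l' l → σ l' ⊆ τ l)
    {U : ℕ → Set X} (hU : POLegalRun τ U) :
    (range U).Infinite ∧ ∀ B ∈ ℬ, {V ∈ range U | ¬ B ⊆ V}.Finite :=
  infinite_range_and_finite_of_forall_strictMono hℬ (fun n => (hU n).2.2) fun _ he =>
    hσ _ (hU.comp_strictMono hστ he)

theorem stmt8_general {X : Type*} [TopologicalSpace X]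
    (𝒜 ℬ : Set (Set X)) (hIB : IdealBase 𝒜) (hUB : ⋃₀ ℬ = univ) :
    ((∃ σ : List (Set X) → Set X, (∀ l, σ l ∈ 𝒜) ∧
        ∀ U : ℕ → Set X, POLegalRun σ U → ∀ B ∈ ℬ, ∃ n, B ⊆ U n) ↔
      (∃ σ : List (Set X) → Set X, (∀ l, σ l ∈ 𝒜) ∧
        ∀ U : ℕ → Set X, POLegalRun σ U →
          (Set.range U).Infinite ∧ ∀ B ∈ ℬ, {V ∈ Set.range U | ¬ B ⊆ V}.Finite)) ∧
    ((∃ p : ℕ → Set X, (∀ n, p n ∈ 𝒜) ∧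
        ∀ U : ℕ → Set X, (∀ n, IsOpen (U n) ∧ p n ⊆ U n ∧ U n ≠ univ) →
          ∀ B ∈ ℬ, ∃ n, B ⊆ U n) ↔
      (∃ p : ℕ → Set X, (∀ n, p n ∈ 𝒜) ∧
        ∀ U : ℕ → Set X, (∀ n, IsOpen (U n) ∧ p n ⊆ U n ∧ U n ≠ univ) →
          (Set.range U).Infinite ∧ ∀ B ∈ ℬ, {V ∈ Set.range U | ¬ B ⊆ V}.Finite)) := by
  refine ⟨⟨fun ⟨σ, hσ𝒜, hσ⟩ => ?_, fun ⟨σ, hσ𝒜, hσ⟩ => ⟨σ, hσ𝒜, fun U hU B hB =>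
      exists_subset_of_infinite_range (hσ U hU).1 ((hσ U hU).2 B hB)⟩⟩,
    ⟨fun ⟨p, hp𝒜, hp⟩ => ?_, fun ⟨p, hp𝒜, hp⟩ => ⟨p, hp𝒜, fun U hU B hB =>
      exists_subset_of_infinite_range (hp U hU).1 ((hp U hU).2 B hB)⟩⟩⟩
  · obtain ⟨τ, hτ𝒜, hστ⟩ := hIB.exists_forall_rel_subset (r := List.Sublist)
      (fun l => (List.finite_toSet l.sublists).subset fun _ => List.mem_sublists.2) hσ𝒜
    exact ⟨τ, hτ𝒜, fun U hU => POLegalRun.infinite_range_and_finite hUB hσ hστ hU⟩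
  · obtain ⟨q, hq𝒜, hpq⟩ := hIB.exists_forall_rel_subset (r := (· ≤ ·)) finite_Iic hp𝒜
    refine ⟨q, hq𝒜, fun U hU => ?_⟩
    exact POLegalRun.infinite_range_and_finite (σ := p ∘ List.length) hUB
      (fun V hV => hp V (poLegalRun_comp_length_iff.1 hV))
      (fun _ _ hl => hpq _ _ hl.length_le) (poLegalRun_comp_length_iff.2 hU)

/-- For a T1 space `X`, an ideal-base `𝒜` of proper subsets with `⋃𝒜 = X`,
and `ℬ` with `⋃ℬ = X`, in the generalized point-open game (One plays `A_n ∈ 𝒜`, Two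
responds with a proper open `U_n ⊇ A_n`):
(a) One has a strategy forcing every `B ∈ ℬ` inside some `U_n` iff One has a strategy
forcing `{U_n : n}` to be infinite with `{U ∈ 𝒰 : B ⊄ U}` finite for every `B ∈ ℬ`;
(b) likewise for predetermined strategies. -/
theorem stmt8 {X : Type*} [TopologicalSpace X] [T1Space X]
    (𝒜 ℬ : Set (Set X)) (hIB : IdealBase 𝒜)
    (hproper : ∀ A ∈ 𝒜, A ≠ univ) (hUA : ⋃₀ 𝒜 = univ) (hUB : ⋃₀ ℬ = univ) :
    ((∃ σ : List (Set X) → Set X, (∀ l, σ l ∈ 𝒜) ∧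
        ∀ U : ℕ → Set X, POLegalRun σ U → ∀ B ∈ ℬ, ∃ n, B ⊆ U n) ↔
      (∃ σ : List (Set X) → Set X, (∀ l, σ l ∈ 𝒜) ∧
        ∀ U : ℕ → Set X, POLegalRun σ U →
          (Set.range U).Infinite ∧ ∀ B ∈ ℬ, {V ∈ Set.range U | ¬ B ⊆ V}.Finite)) ∧
    ((∃ p : ℕ → Set X, (∀ n, p n ∈ 𝒜) ∧
        ∀ U : ℕ → Set X, (∀ n, IsOpen (U n) ∧ p n ⊆ U n ∧ U n ≠ univ) →
          ∀ B ∈ ℬ, ∃ n, B ⊆ U n) ↔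
      (∃ p : ℕ → Set X, (∀ n, p n ∈ 𝒜) ∧
        ∀ U : ℕ → Set X, (∀ n, IsOpen (U n) ∧ p n ⊆ U n ∧ U n ≠ univ) →
          (Set.range U).Infinite ∧ ∀ B ∈ ℬ, {V ∈ Set.range U | ¬ B ⊆ V}.Finite)) :=
  stmt8_general 𝒜 ℬ hIB hUB
end

section
/- Let 𝒜, ℬ, 𝒞, 𝒟 be collections and α an ordinal. Suppose for each ξ < α there are functions T⃖_ξ : ℬ → 𝒜 and T⃗_ξ : (⋃𝒜) × ℬ → ⋃ℬ such that: (Tr1) if x ∈ T⃖_ξ(B) then T⃗_ξ(x,B) ∈ B; and (Tr2) whenever B_ξ ∈ ℬ and x_ξ ∈ T⃖_ξ(B_ξ) for all ξ < α, if {x_ξ : ξ < α} ∈ 𝒞 then {T⃗_ξ(x_ξ,B_ξ) : ξ < α} ∈ 𝒟. Then G^α_1(𝒜,𝒞) ≤_II G^α_1(ℬ,𝒟), i.e., all four hold: if Two has a winning Markov strategy in G^α_1(𝒜,𝒞) then Two has one in G^α_1(ℬ,𝒟); if Two has a winning strategy in G^α_1(𝒜,𝒞) then Two has one in G^α_1(ℬ,𝒟);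 if One has no winning strategy in G^α_1(𝒜,𝒞) then One has none in G^α_1(ℬ,𝒟); and if One has no winning predetermined strategy in G^α_1(𝒜,𝒞) then One has none in G^α_1(ℬ,𝒟). -/
/-!
Length-`α` single selection games `G^α₁(𝒜,𝒞)`, for an ordinal `α`.  A position of the
game is encoded by total functions on ordinals; strategies are required to depend only
on the moves made in earlier rounds.
-/

/-- One has a winning strategy in `G^α₁(𝒜,𝒞)`: a function `σ` producing One's move in
round `ξ < α` from Two's earlier picks (depending only on picks in rounds `ζ < ξ`),
always a member of `𝒜`, such that for every compatible run the set of Two's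
selections is not in `𝒞`. -/
def OrdOneWins {β : Type*} (α : Ordinal) (𝒜 𝒞 : Set (Set β)) : Prop :=
  ∃ σ : Ordinal → (Ordinal → β) → Set β,
    (∀ ξ, ξ < α → ∀ f g : Ordinal → β, (∀ ζ, ζ < ξ → f ζ = g ζ) → σ ξ f = σ ξ g) ∧
    (∀ ξ, ξ < α → ∀ f, σ ξ f ∈ 𝒜) ∧
    (∀ x : Ordinal → β, (∀ ξ, ξ < α → x ξ ∈ σ ξ x) → {b | ∃ ξ, ξ < α ∧ x ξ = b} ∉ 𝒞)

/-- One has a winning predetermined strategy in `G^α₁(𝒜,𝒞)`. -/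
def OrdOnePre {β : Type*} (α : Ordinal) (𝒜 𝒞 : Set (Set β)) : Prop :=
  ∃ p : Ordinal → Set β, (∀ ξ, ξ < α → p ξ ∈ 𝒜) ∧
    ∀ x : Ordinal → β, (∀ ξ, ξ < α → x ξ ∈ p ξ) → {b | ∃ ξ, ξ < α ∧ x ξ = b} ∉ 𝒞

/-- Two has a winning strategy in `G^α₁(𝒜,𝒞)`: a function `τ` producing Two's pick in
round `ξ < α` from One's moves in rounds `ζ ≤ ξ` (depending only on those), picking an
element of One's move in round `ξ`, such that for every sequence of legal moves by One
the set of Two's selections is in `𝒞`. -/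
def OrdTwoWins {β : Type*} (α : Ordinal) (𝒜 𝒞 : Set (Set β)) : Prop :=
  ∃ τ : Ordinal → (Ordinal → Set β) → β,
    (∀ ξ, ξ < α → ∀ F G : Ordinal → Set β, (∀ ζ, ζ ≤ ξ → F ζ = G ζ) → τ ξ F = τ ξ G) ∧
    (∀ ξ, ξ < α → ∀ F : Ordinal → Set β, (∀ ζ, ζ ≤ ξ → F ζ ∈ 𝒜) → τ ξ F ∈ F ξ) ∧
    (∀ F : Ordinal → Set β, (∀ ξ, ξ < α → F ξ ∈ 𝒜) →
      {b | ∃ ξ, ξ < α ∧ τ ξ F = b} ∈ 𝒞)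

/-- Two has a winning Markov strategy in `G^α₁(𝒜,𝒞)`: Two's pick depends only on One's
latest move and the current round. -/
def OrdTwoMarkov {β : Type*} (α : Ordinal) (𝒜 𝒞 : Set (Set β)) : Prop :=
  ∃ τ : Set β → Ordinal → β,
    (∀ A ∈ 𝒜, ∀ ξ, ξ < α → τ A ξ ∈ A) ∧
    (∀ F : Ordinal → Set β, (∀ ξ, ξ < α → F ξ ∈ 𝒜) →
      {b | ∃ ξ, ξ < α ∧ τ (F ξ) ξ = b} ∈ 𝒞)


/-- Auxiliary: reconstruct One's `ℬ`-moves from a `ℬ`-strategy `σ`, the translation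
map `Tr`, and Two's `β`-picks `f`, by transfinite recursion. -/
noncomputable def stmt9.Bfun {β γ : Type*} (σ : Ordinal → (Ordinal → γ) → Set γ)
    (Tr : Ordinal → β × Set γ → γ) (f : Ordinal → β) : Ordinal → Set γ := fun ξ =>
  σ ξ (fun ζ => if h : ζ < ξ then Tr ζ (f ζ, stmt9.Bfun σ Tr f ζ) else Tr ζ (f ζ, ∅))
termination_by ξ => ξ
decreasing_by exact h

/-- translation theorem: given translation maps `T⃖_ξ : ℬ → 𝒜` and
`T⃗_ξ : (⋃𝒜) × ℬ → ⋃ℬ` satisfying (Tr1) and (Tr2), we get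
`G^α₁(𝒜,𝒞) ≤_II G^α₁(ℬ,𝒟)`: all four transfer statements hold. -/
theorem stmt9 {β γ : Type*} (α : Ordinal) (𝒜 𝒞 : Set (Set β)) (ℬ 𝒟 : Set (Set γ))
    (Tl : Ordinal → Set γ → Set β) (Tr : Ordinal → β × Set γ → γ)
    (hmem : ∀ ξ, ξ < α → ∀ B ∈ ℬ, Tl ξ B ∈ 𝒜)
    (tr1 : ∀ ξ, ξ < α → ∀ B ∈ ℬ, ∀ x ∈ Tl ξ B, Tr ξ (x, B) ∈ B)
    (tr2 : ∀ (B : Ordinal → Set γ) (x : Ordinal → β),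
      (∀ ξ, ξ < α → B ξ ∈ ℬ) → (∀ ξ, ξ < α → x ξ ∈ Tl ξ (B ξ)) →
      {b | ∃ ξ, ξ < α ∧ x ξ = b} ∈ 𝒞 →
      {c | ∃ ξ, ξ < α ∧ Tr ξ (x ξ, B ξ) = c} ∈ 𝒟) :
    (OrdTwoMarkov α 𝒜 𝒞 → OrdTwoMarkov α ℬ 𝒟) ∧
    (OrdTwoWins α 𝒜 𝒞 → OrdTwoWins α ℬ 𝒟) ∧
    (¬ OrdOneWins α 𝒜 𝒞 → ¬ OrdOneWins α ℬ 𝒟) ∧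
    (¬ OrdOnePre α 𝒜 𝒞 → ¬ OrdOnePre α ℬ 𝒟) := by
  have hBeq : ∀ (σ : Ordinal → (Ordinal → γ) → Set γ),
      (∀ ξ, ξ < α → ∀ f g : Ordinal → γ, (∀ ζ, ζ < ξ → f ζ = g ζ) → σ ξ f = σ ξ g) →
      ∀ (f : Ordinal → β) ξ, ξ < α →
      stmt9.Bfun σ Tr f ξ = σ ξ (fun ζ => Tr ζ (f ζ, stmt9.Bfun σ Tr f ζ)) := by
    intro σ hdep f ξ hξ
    conv_lhs => rw [stmt9.Bfun]
    apply hdep ξ hξ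
    intro ζ hζ
    simp [hζ]
  obtain ⟨part3, part4⟩ : (¬ OrdOneWins α 𝒜 𝒞 → ¬ OrdOneWins α ℬ 𝒟) ∧
      (¬ OrdOnePre α 𝒜 𝒞 → ¬ OrdOnePre α ℬ 𝒟) := by
    constructor
    · intro h hB
      apply h
      obtain ⟨σ, hdep, hleg, hwin⟩ := hB
      have hBe := hBeq σ hdep
      have hBdep : ∀ (f g : Ordinal → β) ξ, ξ < α → (∀ ζ, ζ < ξ → f ζ = g ζ) →
          stmt9.Bfun σ Tr f ξ = stmt9.Bfun σ Tr g ξ := by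
        intro f g ξ
        induction ξ using Ordinal.induction with
        | h ξ ih =>
          intro hξ hfg
          conv_lhs => rw [stmt9.Bfun]
          conv_rhs => rw [stmt9.Bfun]
          apply hdep ξ hξ
          intro ζ hζ
          simp only [hζ, dif_pos]
          rw [hfg ζ hζ, ih ζ hζ (hζ.trans hξ) (fun η hη => hfg η (hη.trans hζ))]
      refine ⟨fun ξ f => Tl ξ (stmt9.Bfun σ Tr f ξ), ?_, ?_, ?_⟩
      · intro ξ hξ f g hfg
        show Tl ξ (stmt9.Bfun σ Tr f ξ) = Tl ξ (stmt9.Bfun σ Tr g ξ)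
        rw [hBdep f g ξ hξ hfg]
      · intro ξ hξ f
        show Tl ξ (stmt9.Bfun σ Tr f ξ) ∈ 𝒜
        rw [hBe f ξ hξ]
        exact hmem ξ hξ _ (hleg ξ hξ _)
      · intro x hx hxC
        have hBξ : ∀ ξ, ξ < α → stmt9.Bfun σ Tr x ξ ∈ ℬ := by
          intro ξ hξ; rw [hBe x ξ hξ]; exact hleg ξ hξ _
        have hxTl : ∀ ξ, ξ < α → x ξ ∈ Tl ξ (stmt9.Bfun σ Tr x ξ) := hx
        have hD := tr2 (fun ξ => stmt9.Bfun σ Tr x ξ) x hBξ hxTl hxC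
        exact hwin (fun ζ => Tr ζ (x ζ, stmt9.Bfun σ Tr x ζ))
          (fun ξ hξ => by
            show _ ∈ σ ξ _
            rw [← hBe x ξ hξ]
            exact tr1 ξ hξ _ (hBξ ξ hξ) _ (hxTl ξ hξ)) hD
    · intro h hB
      apply h
      obtain ⟨p, hleg, hwin⟩ := hB
      refine ⟨fun ξ => Tl ξ (p ξ), fun ξ hξ => hmem ξ hξ _ (hleg ξ hξ), ?_⟩
      intro x hx hxC
      exact hwin (fun ξ => Tr ξ (x ξ, p ξ))
        (fun ξ hξ => tr1 ξ hξ _ (hleg ξ hξ) _ (hx ξ hξ))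
        (tr2 p x hleg hx hxC)
  refine ⟨?_, ?_, part3, part4⟩
  · rintro ⟨τ, hτleg, hτwin⟩
    refine ⟨fun Bset ξ => Tr ξ (τ (Tl ξ Bset) ξ, Bset), ?_, ?_⟩
    · intro Bset hBset ξ hξ
      exact tr1 ξ hξ _ hBset _ (hτleg _ (hmem ξ hξ _ hBset) ξ hξ)
    · intro F hF
      have hx : ∀ ξ, ξ < α → τ (Tl ξ (F ξ)) ξ ∈ Tl ξ (F ξ) :=
        fun ξ hξ => hτleg _ (hmem ξ hξ _ (hF ξ hξ)) ξ hξ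
      exact tr2 F (fun ξ => τ (Tl ξ (F ξ)) ξ) hF hx
        (hτwin (fun ξ => Tl ξ (F ξ)) (fun ξ hξ => hmem ξ hξ _ (hF ξ hξ)))
  · rintro ⟨τ, hτdep, hτleg, hτwin⟩
    refine ⟨fun ξ F => Tr ξ (τ ξ (fun ζ => Tl ζ (F ζ)), F ξ), ?_, ?_, ?_⟩
    · intro ξ hξ F G hFG
      show Tr ξ (τ ξ (fun ζ => Tl ζ (F ζ)), F ξ) = Tr ξ (τ ξ (fun ζ => Tl ζ (G ζ)), G ξ)
      rw [hτdep ξ hξ (fun ζ => Tl ζ (F ζ)) (fun ζ => Tl ζ (G ζ))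
        (fun ζ hζ => by show Tl ζ (F ζ) = Tl ζ (G ζ); rw [hFG ζ hζ]), hFG ξ le_rfl]
    · intro ξ hξ F hF
      exact tr1 ξ hξ _ (hF ξ le_rfl) _
        (hτleg ξ hξ _ (fun ζ hζ => hmem ζ (hζ.trans_lt hξ) _ (hF ζ hζ)))
    · intro F hF
      have hx : ∀ ξ, ξ < α → τ ξ (fun ζ => Tl ζ (F ζ)) ∈ Tl ξ (F ξ) :=
        fun ξ hξ => hτleg ξ hξ _ (fun ζ hζ => hmem ζ (hζ.trans_lt hξ) _ (hF ζ (hζ.trans_lt hξ)))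
      exact tr2 F (fun ξ => τ ξ (fun ζ => Tl ζ (F ζ))) hF hx
        (hτwin (fun ξ => Tl ξ (F ξ)) (fun ξ hξ => hmem ξ hξ _ (hF ξ hξ)))
end

section
/- Let X be a Tychonoff space and 𝒜,ℬ ⊆ ℘(X) with ℬ an ideal-base. Consider the game 𝔊₁ in which in round n One plays a family 𝒰_n of open subsets of X such that every A ∈ 𝒜 is contained in some member of 𝒰_n, Two picks U_n ∈ 𝒰_n, and Two wins iff every B ∈ ℬ satisfies B ⊆ U_n for infinitely many n; and the game 𝔊₂ in which in round n One plays a set S_n ⊆ C(X) with 𝟎 ∈ cl_{C_𝒜(X)}(S_n), Two picks f_n ∈ S_n, and Two wins iff 𝟎 ∈ cl_{C_ℬ(X)}({f_n : n ∈ ω}). Then 𝔊₁ ≤_II 𝔊₂: if Two has a winning Markov strategy (respectively, winning strategy) in 𝔊₁ then Two has one in 𝔊₂, and if One has no winning strategy (respectively, no winning predetermined strategy) in 𝔊₁ then One has none in 𝔊₂. -/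
/-!
ω-round single selection games, with winning condition given by a predicate `W` on the
sequence of Two's selections (Two wins a run iff `W` holds of it).
-/

/-- One has a winning strategy: `σ` maps Two's previous picks to a member of `𝒜`, and
defeats every compatible sequence of picks by Two. -/
def OneWinsG {β : Type*} (𝒜 : Set (Set β)) (W : (ℕ → β) → Prop) : Prop :=
  ∃ σ : List β → Set β, (∀ l, σ l ∈ 𝒜) ∧
    ∀ x : ℕ → β, (∀ n, x n ∈ σ (List.ofFn fun i : Fin n => x i)) → ¬ W x

/-- One has a winning predetermined strategy (a function of the round number only). -/
def OnePreG {β : Type*} (𝒜 : Set (Set β)) (W : (ℕ → β) → Prop) : Prop :=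
  ∃ p : ℕ → Set β, (∀ n, p n ∈ 𝒜) ∧ ∀ x : ℕ → β, (∀ n, x n ∈ p n) → ¬ W x

/-- Two has a winning strategy: `τ` maps One's previous moves and One's current move to
a selection from the current move, and wins against every legal sequence of moves by One. -/
def TwoWinsG {β : Type*} (𝒜 : Set (Set β)) (W : (ℕ → β) → Prop) : Prop :=
  ∃ τ : List (Set β) → Set β → β, (∀ l A, A ∈ 𝒜 → τ l A ∈ A) ∧
    ∀ A : ℕ → Set β, (∀ n, A n ∈ 𝒜) →
      W fun n => τ (List.ofFn fun i : Fin n => A i) (A n)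

/-- Two has a winning Markov strategy (a function of One's latest move and the round). -/
def TwoMarkovG {β : Type*} (𝒜 : Set (Set β)) (W : (ℕ → β) → Prop) : Prop :=
  ∃ τ : Set β → ℕ → β, (∀ A ∈ 𝒜, ∀ n, τ A n ∈ A) ∧
    ∀ A : ℕ → Set β, (∀ n, A n ∈ 𝒜) → W fun n => τ (A n) n

/-- `G₁(𝒜,W) ≤_II G₁(ℬ,V)`: transfer of winning (Markov) strategies for Two and of
non-existence of winning (predetermined) strategies for One. -/
def LeTwoG {β γ : Type*} (𝒜 : Set (Set β)) (W : (ℕ → β) → Prop)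
    (ℬ : Set (Set γ)) (V : (ℕ → γ) → Prop) : Prop :=
  (TwoMarkovG 𝒜 W → TwoMarkovG ℬ V) ∧ (TwoWinsG 𝒜 W → TwoWinsG ℬ V) ∧
  (¬ OneWinsG 𝒜 W → ¬ OneWinsG ℬ V) ∧ (¬ OnePreG 𝒜 W → ¬ OnePreG ℬ V)

open Set Topology

variable {X : Type*} [TopologicalSpace X]

/-- The basic set `[f;A,ε] = {g : sup_{x∈A} |f x − g x| < ε}`, the sup condition being
expressed as the existence of a bound `δ < ε`. -/
def fnBall (f : C(X, ℝ)) (A : Set X) (ε : ℝ) : Set C(X, ℝ) :=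
  {g | ∃ δ : ℝ, δ < ε ∧ ∀ x ∈ A, |f x - g x| ≤ δ}

/-- The `𝒜`-open topology on `C(X,ℝ)` (i.e. the topology of `C_𝒜(X)`), generated by the
sets `[f;A,ε]` for `f ∈ C(X,ℝ)`, `A ∈ 𝒜`, `ε > 0`. -/
def setOpenTop (𝒜 : Set (Set X)) : TopologicalSpace C(X, ℝ) :=
  TopologicalSpace.generateFrom
    {S | ∃ f : C(X, ℝ), ∃ A ∈ 𝒜, ∃ ε : ℝ, 0 < ε ∧ S = fnBall f A ε}

/-- The collection `𝒩_{C_𝒜(X)}(𝟎)` of open neighborhoods of the zero function in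
`C_𝒜(X)`. -/
def Nbhd0 (𝒜 : Set (Set X)) : Set (Set C(X, ℝ)) :=
  {U | IsOpen[setOpenTop 𝒜] U ∧ (0 : C(X, ℝ)) ∈ U}

/-!
Compare a function `f` picked in round `n` with the open set `{x | |f x| < 1/(n+1)}`. If `𝟎` is
in the `C_𝒜(X)`-closure of `S`, the images of the members of `S` form a legal move of One in the
cover game. For an ideal-base `ℬ` the sets `[𝟎;B,ε]` with `B ∈ ℬ` form a neighbourhood base of `𝟎`
in `C_ℬ(X)`, so if these open sets contain every `B ∈ ℬ` infinitely often then the picked functions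
accumulate at `𝟎`. A move-by-move translation with these two properties transfers strategies of
both players: a move in one game is pulled back by choosing a preimage in the other.
-/

open Function

structure IsGameTranslation {β γ : Type*} (φ : ℕ → γ → β) (𝒜 : Set (Set β))
    (W : (ℕ → β) → Prop) (ℬ : Set (Set γ)) (V : (ℕ → γ) → Prop) : Prop where
  image_mem : ∀ S ∈ ℬ, ∀ n, φ n '' S ∈ 𝒜
  win : ∀ f : ℕ → γ, W (fun n => φ n (f n)) → V f

namespace IsGameTranslation

variable {β γ : Type*} [Nonempty γ] {φ : ℕ → γ → β} {𝒜 : Set (Set β)}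
  {W : (ℕ → β) → Prop} {ℬ : Set (Set γ)} {V : (ℕ → γ) → Prop}

theorem twoMarkovG (h : IsGameTranslation φ 𝒜 W ℬ V) (hτ : TwoMarkovG 𝒜 W) :
    TwoMarkovG ℬ V := by
  obtain ⟨τ, hτ, hwin⟩ := hτ
  have hpre : ∀ S ∈ ℬ, ∀ n, τ (φ n '' S) n ∈ φ n '' S :=
    fun S hS n => hτ _ (h.image_mem S hS n) n
  refine ⟨fun S n => invFunOn (φ n) S (τ (φ n '' S) n),
    fun S hS n => invFunOn_mem (hpre S hS n), fun S hS => h.win _ ?_⟩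
  simpa only [invFunOn_eq (hpre _ (hS _) _)] using hwin _ fun n => h.image_mem _ (hS n) n

theorem twoWinsG (h : IsGameTranslation φ 𝒜 W ℬ V) (hτ : TwoWinsG 𝒜 W) :
    TwoWinsG ℬ V := by
  obtain ⟨τ, hτ, hwin⟩ := hτ
  have hpre : ∀ (l : List (Set γ)), ∀ S ∈ ℬ,
      τ (l.mapIdx fun i T => φ i '' T) (φ l.length '' S) ∈ φ l.length '' S :=
    fun l S hS => hτ _ _ (h.image_mem S hS _)
  refine ⟨fun l S => invFunOn (φ l.length) S
      (τ (l.mapIdx fun i T => φ i '' T) (φ l.length '' S)),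
    fun l S hS => invFunOn_mem (hpre l S hS), fun S hS => h.win _ ?_⟩
  have hmap : ∀ n, ((List.ofFn fun i : Fin n => S i).mapIdx fun i T => φ i '' T) =
      List.ofFn fun i : Fin n => φ i '' S i := by
    intro n
    simp [List.mapIdx_eq_ofFn]
  convert hwin _ fun n => h.image_mem _ (hS n) n using 2 with n
  simpa [hmap] using invFunOn_eq (hpre (List.ofFn fun i : Fin n => S i) (S n) (hS n))

/-- Two's picks `b₀, …, bₙ₋₁` against the strategy `l ↦ φ l.length '' σ (pullbackPlay φ σ l)`,
pulled back to picks against `σ`: the `k`-th is a `φ k`-preimage of `b_k`. -/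
noncomputable def pullbackPlay (φ : ℕ → γ → β) (σ : List γ → Set γ) : List β → List γ :=
  List.foldl (fun c b => c ++ [invFunOn (φ c.length) (σ c) b]) []

theorem pullbackPlay_append_singleton (σ : List γ → Set γ) (l : List β) (b : β) :
    pullbackPlay φ σ (l ++ [b]) = pullbackPlay φ σ l ++
      [invFunOn (φ (pullbackPlay φ σ l).length) (σ (pullbackPlay φ σ l)) b] := by
  simp [pullbackPlay, List.foldl_append]

theorem length_pullbackPlay (σ : List γ → Set γ) (l : List β) :
    (pullbackPlay φ σ l).length = l.length := by
  induction l using List.reverseRecOn with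
  | nil => rfl
  | append_singleton l b ih => simp [pullbackPlay_append_singleton, ih]

theorem pullbackPlay_ofFn (σ : List γ → Set γ) (x : ℕ → β) (n : ℕ) :
    pullbackPlay φ σ (List.ofFn fun i : Fin n => x i) = List.ofFn fun i : Fin n =>
      invFunOn (φ i) (σ (pullbackPlay φ σ (List.ofFn fun j : Fin i => x j))) (x i) := by
  induction n with
  | zero => rfl
  | succ n ih =>
    rw [List.ofFn_succ', List.ofFn_succ', List.concat_eq_append, List.concat_eq_append]
    simp only [Fin.val_castSucc, Fin.val_last]
    rw [pullbackPlay_append_singleton, ih, List.length_ofFn]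

theorem oneWinsG (h : IsGameTranslation φ 𝒜 W ℬ V) (hσ : OneWinsG ℬ V) :
    OneWinsG 𝒜 W := by
  obtain ⟨σ, hσ, hwin⟩ := hσ
  refine ⟨fun l => φ l.length '' σ (pullbackPlay φ σ l),
    fun l => h.image_mem _ (hσ _) _, fun x hx hW => ?_⟩
  let c : ℕ → γ := fun n =>
    invFunOn (φ n) (σ (pullbackPlay φ σ (List.ofFn fun j : Fin n => x j))) (x n)
  have hpre : ∀ n, x n ∈ φ n '' σ (pullbackPlay φ σ (List.ofFn fun j : Fin n => x j)) := by
    intro n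
    simpa [length_pullbackPlay] using hx n
  refine hwin c (fun n => ?_) (h.win c ?_)
  · rw [← pullbackPlay_ofFn]
    exact invFunOn_mem (hpre n)
  · simpa only [c, invFunOn_eq (hpre _)] using hW

theorem onePreG (h : IsGameTranslation φ 𝒜 W ℬ V) (hp : OnePreG ℬ V) : OnePreG 𝒜 W := by
  obtain ⟨p, hp, hwin⟩ := hp
  refine ⟨fun n => φ n '' p n, fun n => h.image_mem _ (hp n) n, fun x hx hW => ?_⟩
  refine hwin (fun n => invFunOn (φ n) (p n) (x n)) (fun n => invFunOn_mem (hx n)) (h.win _ ?_)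
  simpa only [invFunOn_eq (hx _)] using hW

theorem leTwoG (h : IsGameTranslation φ 𝒜 W ℬ V) : LeTwoG 𝒜 W ℬ V :=
  ⟨h.twoMarkovG, h.twoWinsG, mt h.oneWinsG, mt h.onePreG⟩

end IsGameTranslation

section FnBall

variable {𝒜 : Set (Set X)} {A B : Set X} {ε η : ℝ}

theorem mem_fnBall_zero {g : C(X, ℝ)} :
    g ∈ fnBall 0 A ε ↔ ∃ δ < ε, ∀ x ∈ A, |g x| ≤ δ := by
  simp [fnBall]

theorem fnBall_mono (f : C(X, ℝ)) (hAB : A ⊆ B) (hεη : ε ≤ η) : fnBall f B ε ⊆ fnBall f A η :=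
  fun _ ⟨δ, hδ, hg⟩ => ⟨δ, hδ.trans_le hεη, fun x hx => hg x (hAB hx)⟩

theorem isOpen_fnBall (f : C(X, ℝ)) (hA : A ∈ 𝒜) (hε : 0 < ε) :
    IsOpen[setOpenTop 𝒜] (fnBall f A ε) :=
  .basic _ ⟨f, A, hA, ε, hε, rfl⟩

theorem mem_fnBall_self (f : C(X, ℝ)) (hε : 0 < ε) : f ∈ fnBall f A ε :=
  ⟨0, hε, fun x _ => by simp⟩

theorem exists_fnBall_zero_subset {f : C(X, ℝ)} (h : (0 : C(X, ℝ)) ∈ fnBall f A ε) :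
    ∃ η > 0, fnBall 0 A η ⊆ fnBall f A ε := by
  obtain ⟨δ, hδε, hf⟩ := h
  refine ⟨ε - δ, sub_pos.2 hδε, fun g hg => ?_⟩
  obtain ⟨δ', hδ', hg⟩ := mem_fnBall_zero.1 hg
  refine ⟨δ + δ', by linarith, fun x hx => ?_⟩
  calc |f x - g x| ≤ |f x - 0| + |g x| := by simpa using abs_sub (f x) (g x)
    _ ≤ δ + δ' := add_le_add (hf x hx) (hg x hx)

theorem hasBasis_nhds_zero_setOpenTop (h𝒜 : IdealBase 𝒜) (hne : 𝒜.Nonempty) :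
    (@nhds _ (setOpenTop 𝒜) 0).HasBasis (fun p : Set X × ℝ => p.1 ∈ 𝒜 ∧ 0 < p.2)
      fun p => fnBall 0 p.1 p.2 := by
  have hdir : ∀ p : Set X × ℝ, p.1 ∈ 𝒜 ∧ 0 < p.2 → ∀ q : Set X × ℝ, q.1 ∈ 𝒜 ∧ 0 < q.2 →
      ∃ r : Set X × ℝ, (r.1 ∈ 𝒜 ∧ 0 < r.2) ∧
        fnBall 0 r.1 r.2 ⊆ fnBall 0 p.1 p.2 ∧ fnBall 0 r.1 r.2 ⊆ fnBall 0 q.1 q.2 := by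
    rintro ⟨A₁, ε₁⟩ ⟨hA₁, hε₁⟩ ⟨A₂, ε₂⟩ ⟨hA₂, hε₂⟩
    obtain ⟨A₃, hA₃, hsub⟩ := h𝒜 A₁ hA₁ A₂ hA₂
    exact ⟨(A₃, min ε₁ ε₂), ⟨hA₃, lt_min hε₁ hε₂⟩,
      fnBall_mono 0 (subset_union_left.trans hsub) (min_le_left _ _),
      fnBall_mono 0 (subset_union_right.trans hsub) (min_le_right _ _)⟩
  obtain ⟨A, hA⟩ := hne
  convert Filter.hasBasis_biInf_principal' hdir ⟨(A, 1), hA, one_pos⟩ using 1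
  refine le_antisymm (le_iInf₂ fun p hp => ?_) ?_
  · exact Filter.le_principal_iff.2
      (@IsOpen.mem_nhds _ (setOpenTop 𝒜) _ _ (isOpen_fnBall 0 hp.1 hp.2) (mem_fnBall_self 0 hp.2))
  · unfold setOpenTop
    rw [TopologicalSpace.nhds_generateFrom]
    refine le_iInf₂ fun s ⟨h0, f, A, hA, ε, hε, hs⟩ => ?_
    subst hs
    obtain ⟨η, hη, hsub⟩ := exists_fnBall_zero_subset h0
    exact iInf₂_le_of_le (A, η) ⟨hA, hη⟩ (Filter.principal_mono.2 hsub)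

theorem exists_subset_setOf_abs_lt {S : Set C(X, ℝ)}
    (hS : (0 : C(X, ℝ)) ∈ closure[setOpenTop 𝒜] S) (hA : A ∈ 𝒜) (hε : 0 < ε) :
    ∃ f ∈ S, A ⊆ {x | |f x| < ε} := by
  obtain ⟨f, hf, hfS⟩ := (@mem_closure_iff _ (setOpenTop 𝒜) _ _).1 hS _
    (isOpen_fnBall 0 hA hε) (mem_fnBall_self 0 hε)
  obtain ⟨δ, hδ, hfδ⟩ := mem_fnBall_zero.1 hf
  exact ⟨f, hfS, fun x hx => (hfδ x hx).trans_lt hδ⟩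

theorem zero_mem_closure_setOpenTop_range (h𝒜 : IdealBase 𝒜) {f : ℕ → C(X, ℝ)}
    (hf : ∀ A ∈ 𝒜, ∀ ε > 0, ∃ n, f n ∈ fnBall 0 A ε) :
    (0 : C(X, ℝ)) ∈ closure[setOpenTop 𝒜] (range f) := by
  rcases 𝒜.eq_empty_or_nonempty with rfl | hne
  · have htop : @nhds _ (setOpenTop (∅ : Set (Set X))) 0 = ⊤ := by
      unfold setOpenTop
      simp [TopologicalSpace.nhds_generateFrom]
    rw [@mem_closure_iff_nhds _ (setOpenTop ∅), htop]
    simpa using range_nonempty f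
  · refine (@mem_closure_iff_nhds_basis _ (setOpenTop 𝒜)
      (t := range f) (h := hasBasis_nhds_zero_setOpenTop h𝒜 hne)).2 ?_
    rintro ⟨A, ε⟩ ⟨hA, hε⟩
    obtain ⟨n, hn⟩ := hf A hA ε hε
    exact ⟨f n, mem_range_self n, hn⟩

end FnBall

theorem isGameTranslation_setOf_abs_lt (𝒜 ℬ : Set (Set X)) (hB : IdealBase ℬ) :
    IsGameTranslation (fun (n : ℕ) (f : C(X, ℝ)) => {x | |f x| < 1 / ((n : ℝ) + 1)})
      {𝒰 : Set (Set X) | (∀ U ∈ 𝒰, IsOpen U) ∧ ∀ A ∈ 𝒜, ∃ U ∈ 𝒰, A ⊆ U}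
      (fun U : ℕ → Set X => ∀ B ∈ ℬ, {n : ℕ | B ⊆ U n}.Infinite)
      {S : Set C(X, ℝ) | (0 : C(X, ℝ)) ∈ closure[setOpenTop 𝒜] S}
      (fun f : ℕ → C(X, ℝ) => (0 : C(X, ℝ)) ∈ closure[setOpenTop ℬ] (Set.range f)) where
  image_mem S hS n := by
    refine ⟨?_, fun A hA => ?_⟩
    · rintro U ⟨f, -, rfl⟩
      exact isOpen_lt (by fun_prop) continuous_const
    · obtain ⟨f, hfS, hAf⟩ := exists_subset_setOf_abs_lt hS hA (Nat.one_div_pos_of_nat (α := ℝ))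
      exact ⟨_, mem_image_of_mem _ hfS, hAf⟩
  win f hwin := by
    refine zero_mem_closure_setOpenTop_range hB fun B hB ε hε => ?_
    obtain ⟨N, hN⟩ := exists_nat_one_div_lt hε
    obtain ⟨n, hBn, hNn⟩ := (hwin B hB).exists_gt N
    refine ⟨n, mem_fnBall_zero.2 ⟨1 / ((n : ℝ) + 1), ?_, fun x hx => (hBn hx).le⟩⟩
    exact lt_of_le_of_lt (Nat.one_div_le_one_div hNn.le) hN

theorem stmt11_general {X : Type*} [TopologicalSpace X]
    (𝒜 ℬ : Set (Set X)) (hB : IdealBase ℬ) :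
    LeTwoG
      {𝒰 : Set (Set X) | (∀ U ∈ 𝒰, IsOpen U) ∧ ∀ A ∈ 𝒜, ∃ U ∈ 𝒰, A ⊆ U}
      (fun U : ℕ → Set X => ∀ B ∈ ℬ, {n : ℕ | B ⊆ U n}.Infinite)
      {S : Set C(X, ℝ) | (0 : C(X, ℝ)) ∈ closure[setOpenTop 𝒜] S}
      (fun f : ℕ → C(X, ℝ) =>
        (0 : C(X, ℝ)) ∈ closure[setOpenTop ℬ] (Set.range f)) :=
  (isGameTranslation_setOf_abs_lt 𝒜 ℬ hB).leTwoG

/-- For a Tychonoff space `X` and `𝒜, ℬ ⊆ ℘(X)` with `ℬ` an ideal-base,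
`𝔊₁ ≤_II 𝔊₂`, where in `𝔊₁` One plays families of open sets in which every `A ∈ 𝒜` has
a superset, Two selects a member, and Two wins iff every `B ∈ ℬ` is contained in `U_n`
for infinitely many `n`; and in `𝔊₂` One plays sets `S ⊆ C(X,ℝ)` with
`𝟎 ∈ cl_{C_𝒜(X)}(S)`, Two selects `f_n ∈ S_n`, and Two wins iff
`𝟎 ∈ cl_{C_ℬ(X)}({f_n : n ∈ ω})`.
(These are `G₁(𝒪(X,𝒜), Λ(X,ℬ))` and `G₁(Ω_{C_𝒜(X),𝟎}, Ω_{C_ℬ(X),𝟎})`.) -/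
theorem stmt11 {X : Type*} [TopologicalSpace X] [T35Space X]
    (𝒜 ℬ : Set (Set X)) (hB : IdealBase ℬ) :
    LeTwoG
      {𝒰 : Set (Set X) | (∀ U ∈ 𝒰, IsOpen U) ∧ ∀ A ∈ 𝒜, ∃ U ∈ 𝒰, A ⊆ U}
      (fun U : ℕ → Set X => ∀ B ∈ ℬ, {n : ℕ | B ⊆ U n}.Infinite)
      {S : Set C(X, ℝ) | (0 : C(X, ℝ)) ∈ closure[setOpenTop 𝒜] S}
      (fun f : ℕ → C(X, ℝ) =>
        (0 : C(X, ℝ)) ∈ closure[setOpenTop ℬ] (Set.range f)) :=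
  stmt11_general 𝒜 ℬ hB
end

section
/- Let X be a Tychonoff space and 𝒜,ℬ ⊆ ℘(X) with ℬ an ideal-base. Consider the game 𝔊₁ in which in round n One plays an open neighborhood W_n of 𝟎 in C_𝒜(X), Two picks f_n ∈ W_n, and Two wins iff 𝟎 ∉ cl_{C_ℬ(X)}({f_n : n ∈ ω}); and the game 𝔊₂ in which in round n One picks A_n ∈ 𝒜, Two responds with an open set U_n ⊆ X with A_n ⊆ U_n, and Two wins iff some B ∈ ℬ satisfies B ⊆ U_n for at most finitely many n. Then 𝔊₁ ≤_II 𝔊₂: if Two has a winning Markov strategy (respectively, winning strategy) in 𝔊₁ then Two has one in 𝔊₂, and if One has no winning strategy (respectively, no winning predetermined strategy) in 𝔊₁ then One has none in 𝔊₂. -/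
open Set Topology

variable {X : Type*} [TopologicalSpace X]

namespace Stmt13Aux

noncomputable def thr (n : ℕ) : ℝ := 1 / ((n : ℝ) + 1)

lemma thr_pos (n : ℕ) : 0 < thr n := by unfold thr; positivity

lemma finite_thr {ε : ℝ} (hε : 0 < ε) : {n : ℕ | ε ≤ thr n}.Finite := by
  obtain ⟨N, hN⟩ := exists_nat_gt (1 / ε)
  refine (Set.finite_Iio N).subset ?_
  intro n hn
  simp only [Set.mem_setOf_eq, thr] at hn
  have hpos : (0:ℝ) < (n:ℝ) + 1 := by positivity
  have h2 : ε * ((n:ℝ) + 1) ≤ 1 := (le_div_iff₀ hpos).mp hn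
  have h3 : ((n:ℝ) + 1) ≤ 1 / ε := (le_div_iff₀ hε).mpr (by linarith)
  have h4 : (n : ℝ) < N := by linarith
  simpa [Set.mem_Iio] using Nat.cast_lt.mp h4

open Classical in
noncomputable def pickA (𝒜 : Set (Set X)) (S : Set (Set X)) : Set X :=
  if h : ∃ A ∈ 𝒜, S = {U : Set X | IsOpen U ∧ A ⊆ U} then h.choose else ∅

lemma pickA_spec {𝒜 : Set (Set X)} {S : Set (Set X)}
    (h : ∃ A ∈ 𝒜, S = {U : Set X | IsOpen U ∧ A ⊆ U}) :
    pickA 𝒜 S ∈ 𝒜 ∧ S = {U : Set X | IsOpen U ∧ pickA 𝒜 S ⊆ U} := by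
  rw [pickA, dif_pos h]
  exact ⟨h.choose_spec.1, h.choose_spec.2⟩

lemma zero_mem_fnBall {A : Set X} {ε : ℝ} (hε : 0 < ε) :
    (0 : C(X, ℝ)) ∈ fnBall 0 A ε :=
  ⟨0, hε, fun x _ => by simp⟩

lemma fnBall_anti {f : C(X, ℝ)} {B₁ B₂ : Set X} {ε₁ ε₂ : ℝ} (hB : B₁ ⊆ B₂)
    (hε : ε₂ ≤ ε₁) : fnBall f B₂ ε₂ ⊆ fnBall f B₁ ε₁ := by
  rintro g ⟨δ, hδ, hbd⟩
  exact ⟨δ, lt_of_lt_of_le hδ hε, fun x hx => hbd x (hB hx)⟩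

lemma ball_mem_Nbhd0 {𝒜 : Set (Set X)} {A : Set X} (hA : A ∈ 𝒜) {ε : ℝ} (hε : 0 < ε) :
    fnBall (0 : C(X, ℝ)) A ε ∈ Nbhd0 𝒜 :=
  ⟨TopologicalSpace.GenerateOpen.basic _ ⟨0, A, hA, ε, hε, rfl⟩, zero_mem_fnBall hε⟩

lemma notMem_closure {ℬ : Set (Set X)} (hB : IdealBase ℬ) {S : Set C(X, ℝ)}
    (hS : S.Nonempty) (h : (0 : C(X, ℝ)) ∉ closure[setOpenTop ℬ] S) :
    ∃ B ∈ ℬ, ∃ ε : ℝ, 0 < ε ∧ ∀ g ∈ S, g ∉ fnBall (0 : C(X, ℝ)) B ε := by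
  letI := setOpenTop ℬ
  rw [mem_closure_iff] at h
  push_neg at h
  obtain ⟨O, hO, h0O, hOS⟩ := h
  have hOg : TopologicalSpace.GenerateOpen
      {S | ∃ f : C(X, ℝ), ∃ A ∈ ℬ, ∃ ε : ℝ, 0 < ε ∧ S = fnBall f A ε} O := hO
  have key : ∀ O, TopologicalSpace.GenerateOpen
      {S | ∃ f : C(X, ℝ), ∃ A ∈ ℬ, ∃ ε : ℝ, 0 < ε ∧ S = fnBall f A ε} O →
      (0 : C(X, ℝ)) ∈ O →
      (O = univ ∨ ∃ B ∈ ℬ, ∃ ε : ℝ, 0 < ε ∧ fnBall (0 : C(X, ℝ)) B ε ⊆ O) := by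
    intro O hO
    induction hO with
    | basic s hs =>
      intro h0
      obtain ⟨f, A, hA, ε, hε, rfl⟩ := hs
      obtain ⟨δ, hδ, hbd⟩ := h0
      right
      refine ⟨A, hA, ε - δ, by linarith, ?_⟩
      rintro g ⟨δ', hδ', hbd'⟩
      refine ⟨δ + δ', by linarith, fun x hx => ?_⟩
      have h1 := hbd x hx
      have h2 := hbd' x hx
      simp only [ContinuousMap.zero_apply, sub_zero] at h1
      simp only [ContinuousMap.zero_apply, zero_sub, abs_neg] at h2
      calc |f x - g x| = |f x + -(g x)| := by ring_nf
        _ ≤ |f x| + |g x| := by simpa using abs_add_le (f x) (-(g x))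
        _ ≤ δ + δ' := add_le_add h1 h2
    | univ => intro _; left; rfl
    | inter s t hs ht ihs iht =>
      rintro ⟨h0s, h0t⟩
      rcases ihs h0s with rfl | ⟨B₁, hB₁, ε₁, hε₁, hsub₁⟩
      · rcases iht h0t with rfl | ⟨B₂, hB₂, ε₂, hε₂, hsub₂⟩
        · left; simp
        · right; exact ⟨B₂, hB₂, ε₂, hε₂, fun g hg => ⟨trivial, hsub₂ hg⟩⟩
      · rcases iht h0t with rfl | ⟨B₂, hB₂, ε₂, hε₂, hsub₂⟩
        · right; exact ⟨B₁, hB₁, ε₁, hε₁, fun g hg => ⟨hsub₁ hg, trivial⟩⟩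
        · right
          obtain ⟨B₃, hB₃, hsub₃⟩ := hB B₁ hB₁ B₂ hB₂
          refine ⟨B₃, hB₃, min ε₁ ε₂, lt_min hε₁ hε₂, fun g hg => ?_⟩
          exact ⟨hsub₁ (fnBall_anti (fun x hx => hsub₃ (Or.inl hx)) (min_le_left _ _) hg),
            hsub₂ (fnBall_anti (fun x hx => hsub₃ (Or.inr hx)) (min_le_right _ _) hg)⟩
    | sUnion T hT ih =>
      rintro ⟨O', hO', h0O'⟩
      rcases ih O' hO' h0O' with rfl | ⟨B, hBm, ε, hε, hsub⟩
      · left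
        exact Set.eq_univ_of_univ_subset (Set.subset_sUnion_of_mem hO')
      · right
        exact ⟨B, hBm, ε, hε, hsub.trans (Set.subset_sUnion_of_mem hO')⟩
  rcases key O hOg h0O with rfl | ⟨B, hBm, ε, hε, hsub⟩
  · rw [Set.univ_inter] at hOS
    exact absurd hOS hS.ne_empty
  · refine ⟨B, hBm, ε, hε, fun g hg hgball => ?_⟩
    have : g ∈ O ∩ S := ⟨hsub hgball, hg⟩
    rw [hOS] at this
    exact this

lemma C1 {ℬ : Set (Set X)} (hB : IdealBase ℬ) (f : ℕ → C(X, ℝ))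
    (h : (0 : C(X, ℝ)) ∉ closure[setOpenTop ℬ] (Set.range f)) :
    ∃ B ∈ ℬ, {n : ℕ | B ⊆ {x | |f n x| < thr n}}.Finite := by
  obtain ⟨B, hBm, ε, hε, hdis⟩ := notMem_closure hB (Set.range_nonempty f) h
  refine ⟨B, hBm, (finite_thr hε).subset ?_⟩
  intro n hn
  simp only [Set.mem_setOf_eq] at hn ⊢
  by_contra hlt
  push_neg at hlt
  refine hdis (f n) (Set.mem_range_self n) ⟨thr n, hlt, fun x hx => ?_⟩
  have := hn hx
  simp only [Set.mem_setOf_eq] at this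
  simpa [abs_sub_comm] using this.le

lemma isOpen_abs_lt (g : C(X, ℝ)) (c : ℝ) : IsOpen {x | |g x| < c} :=
  isOpen_lt (continuous_abs.comp g.continuous) continuous_const


lemma mapIdx_ofFn {α β : Type*} (g : ℕ → α → β) {n : ℕ} (v : Fin n → α) :
    (List.ofFn v).mapIdx g = List.ofFn fun i => g i (v i) := by
  apply List.ext_getElem
  · simp
  · intro i h1 h2; simp

end Stmt13Aux

open Stmt13Aux in
/-- For a Tychonoff space `X` and `𝒜, ℬ ⊆ ℘(X)` with `ℬ` an ideal-base,
`𝔊₁ ≤_II 𝔊₂`, where in `𝔊₁` One plays open neighborhoods of `𝟎` in `C_𝒜(X)`, Two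
selects a member `f_n`, and Two wins iff `𝟎 ∉ cl_{C_ℬ(X)}({f_n : n ∈ ω})`; and in `𝔊₂`
One plays `A_n ∈ 𝒜` (identified with the family of open supersets of `A_n`), Two picks
an open `U_n ⊇ A_n`, and Two wins iff some `B ∈ ℬ` satisfies `B ⊆ U_n` for at most
finitely many `n`.  (These are `G₁(𝒩_{C_𝒜(X)}(𝟎), ¬Ω_{C_ℬ(X),𝟎})` and
`G₁(𝒩[𝒜], ¬Λ(X,ℬ))`.) -/
theorem stmt13 [T35Space X] (𝒜 ℬ : Set (Set X)) (hB : IdealBase ℬ) :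
    LeTwoG
      (Nbhd0 𝒜)
      (fun f : ℕ → C(X, ℝ) =>
        (0 : C(X, ℝ)) ∉ closure[setOpenTop ℬ] (Set.range f))
      {S : Set (Set X) | ∃ A ∈ 𝒜, S = {U : Set X | IsOpen U ∧ A ⊆ U}}
      (fun U : ℕ → Set X => ∃ B ∈ ℬ, {n : ℕ | B ⊆ U n}.Finite) := by
  refine ⟨?_, ?_, ?_, ?_⟩
  · -- Markov strategies for Two
    rintro ⟨τ, hτ1, hτ2⟩
    refine ⟨fun S n => {x | |τ (fnBall 0 (pickA 𝒜 S) (thr n)) n x| < thr n}, ?_, ?_⟩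
    · intro S hS n
      obtain ⟨hAm, hSeq⟩ := pickA_spec hS
      obtain ⟨δ, hδ, hbd⟩ := hτ1 _ (ball_mem_Nbhd0 hAm (thr_pos n)) n
      have hmem : {x | |τ (fnBall 0 (pickA 𝒜 S) (thr n)) n x| < thr n} ∈
          {U : Set X | IsOpen U ∧ pickA 𝒜 S ⊆ U} := by
        refine ⟨isOpen_abs_lt _ _, fun x hx => ?_⟩
        have h1 := hbd x hx
        simp only [ContinuousMap.zero_apply, zero_sub, abs_neg] at h1
        exact lt_of_le_of_lt h1 hδ
      rwa [← hSeq] at hmem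
    · intro S hS
      exact C1 hB (fun n => τ (fnBall 0 (pickA 𝒜 (S n)) (thr n)) n)
        (hτ2 (fun n => fnBall 0 (pickA 𝒜 (S n)) (thr n))
          (fun n => ball_mem_Nbhd0 (pickA_spec (hS n)).1 (thr_pos n)))
  · -- full strategies for Two
    rintro ⟨τ, hτ1, hτ2⟩
    refine ⟨fun l S => {x | |τ (l.mapIdx fun i S' => fnBall 0 (pickA 𝒜 S') (thr i))
        (fnBall 0 (pickA 𝒜 S) (thr l.length)) x| < thr l.length}, ?_, ?_⟩
    · intro l S hS
      obtain ⟨hAm, hSeq⟩ := pickA_spec hS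
      obtain ⟨δ, hδ, hbd⟩ := hτ1 (l.mapIdx fun i S' => fnBall 0 (pickA 𝒜 S') (thr i)) _
        (ball_mem_Nbhd0 hAm (thr_pos l.length))
      have hmem : {x | |τ (l.mapIdx fun i S' => fnBall 0 (pickA 𝒜 S') (thr i))
          (fnBall 0 (pickA 𝒜 S) (thr l.length)) x| < thr l.length} ∈
          {U : Set X | IsOpen U ∧ pickA 𝒜 S ⊆ U} := by
        refine ⟨isOpen_abs_lt _ _, fun x hx => ?_⟩
        have h1 := hbd x hx
        simp only [ContinuousMap.zero_apply, zero_sub, abs_neg] at h1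
        exact lt_of_le_of_lt h1 hδ
      rwa [← hSeq] at hmem
    · intro S hS
      have hT : ∀ n : ℕ, ((List.ofFn fun i : Fin n => S i).mapIdx
          fun i S' => fnBall (0 : C(X, ℝ)) (pickA 𝒜 S') (thr i)) =
          List.ofFn fun i : Fin n => fnBall (0 : C(X, ℝ)) (pickA 𝒜 (S i)) (thr i) :=
        fun n => mapIdx_ofFn _ _
      have hw := hτ2 (fun n => fnBall 0 (pickA 𝒜 (S n)) (thr n))
        (fun n => ball_mem_Nbhd0 (pickA_spec (hS n)).1 (thr_pos n))
      simp only [List.length_ofFn, hT]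
      exact C1 hB _ hw
  · -- One's full strategies
    intro hn h2
    apply hn
    obtain ⟨σ, hσ1, hσ2⟩ := h2
    refine ⟨fun l => fnBall 0 (pickA 𝒜 (σ (l.mapIdx fun i g => {x | |g x| < thr i})))
      (thr l.length), fun l => ball_mem_Nbhd0 (pickA_spec (hσ1 _)).1 (thr_pos _), ?_⟩
    intro x hx hw
    have hT : ∀ n : ℕ, ((List.ofFn fun i : Fin n => x i).mapIdx
        fun i g => {pt | |g pt| < thr i}) =
        List.ofFn fun i : Fin n => {pt | |x i pt| < thr i} :=
      fun n => mapIdx_ofFn _ _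
    have hUleg : ∀ n : ℕ, {pt | |x n pt| < thr n} ∈
        σ (List.ofFn fun i : Fin n => {pt | |x i pt| < thr i}) := by
      intro n
      have hxn := hx n
      simp only [List.length_ofFn, hT] at hxn
      obtain ⟨δ, hδ, hbd⟩ := hxn
      rw [(pickA_spec (hσ1 (List.ofFn fun i : Fin n => {pt | |x i pt| < thr i}))).2]
      refine ⟨isOpen_abs_lt _ _, fun pt hpt => ?_⟩
      have h1 := hbd pt hpt
      simp only [ContinuousMap.zero_apply, zero_sub, abs_neg] at h1
      exact lt_of_le_of_lt h1 hδ
    exact hσ2 (fun n => {pt | |x n pt| < thr n}) hUleg (C1 hB x hw)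
  · -- One's predetermined strategies
    intro hn h2
    apply hn
    obtain ⟨p, hp1, hp2⟩ := h2
    refine ⟨fun n => fnBall 0 (pickA 𝒜 (p n)) (thr n),
      fun n => ball_mem_Nbhd0 (pickA_spec (hp1 n)).1 (thr_pos n), ?_⟩
    intro x hx hw
    have hUleg : ∀ n : ℕ, {pt | |x n pt| < thr n} ∈ p n := by
      intro n
      obtain ⟨δ, hδ, hbd⟩ := hx n
      rw [(pickA_spec (hp1 n)).2]
      refine ⟨isOpen_abs_lt _ _, fun pt hpt => ?_⟩
      have h1 := hbd pt hpt
      simp only [ContinuousMap.zero_apply, zero_sub, abs_neg] at h1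
      exact lt_of_le_of_lt h1 hδ
    exact hp2 (fun n => {pt | |x n pt| < thr n}) hUleg (C1 hB x hw)
end

section
/- Let X be a Tychonoff space and let 𝒜,ℬ ⊆ ℘(X) be ideal-bases. The following are equivalent: (i) there is a sequence ⟨W_n : n ∈ ω⟩ of open neighborhoods of 𝟎 in C_𝒜(X) such that whenever f_n ∈ W_n for all n, the sequence ⟨f_n⟩ converges to 𝟎 in C_ℬ(X) (i.e., One has a winning predetermined strategy in G_1(𝒩_{C_𝒜(X)}(𝟎), ¬Γ_{C_ℬ(X),𝟎})); (ii) there is a sequence ⟨W_n : n ∈ ω⟩ of open neighborhoods of 𝟎 in C_𝒜(X) such that whenever f_n ∈ W_n for all n, 𝟎 ∈ cl_{C_ℬ(X)}({f_n : n ∈ ω}) (i.e., One has a winning predetermined strategy in G_1(𝒩_{C_𝒜(X)}(𝟎), ¬Ω_{C_ℬ(X),𝟎})); (iii) there is a countable family of open neighborhoods of 𝟎 in C_𝒜(X) such that every open neighborhood of 𝟎 in C_ℬ(X) contains a member of the family. -/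
open Set Topology

variable {X : Type*} [TopologicalSpace X]

/-- For a Tychonoff space `X` and ideal-bases `𝒜, ℬ ⊆ ℘(X)`, the
following are equivalent:
(i) there is a sequence `⟨W_n⟩` of open neighborhoods of `𝟎` in `C_𝒜(X)` such that
whenever `f_n ∈ W_n` for all `n`, the sequence `⟨f_n⟩` converges to `𝟎` in `C_ℬ(X)`
(One has a winning predetermined strategy in `G₁(𝒩_{C_𝒜(X)}(𝟎), ¬Γ_{C_ℬ(X),𝟎})`);
(ii) there is a sequence `⟨W_n⟩` of open neighborhoods of `𝟎` in `C_𝒜(X)` such that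
whenever `f_n ∈ W_n` for all `n`, `𝟎 ∈ cl_{C_ℬ(X)}({f_n : n ∈ ω})`
(One has a winning predetermined strategy in `G₁(𝒩_{C_𝒜(X)}(𝟎), ¬Ω_{C_ℬ(X),𝟎})`);
(iii) there is a countable family of open neighborhoods of `𝟎` in `C_𝒜(X)` such that
every open neighborhood of `𝟎` in `C_ℬ(X)` contains a member of the family.
Stated as (i) ↔ (ii) and (ii) ↔ (iii). -/
theorem stmt15 [T35Space X] (𝒜 ℬ : Set (Set X)) (hA : IdealBase 𝒜) (hB : IdealBase ℬ) :
    ((∃ W : ℕ → Set C(X, ℝ), (∀ n, W n ∈ Nbhd0 𝒜) ∧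
        ∀ f : ℕ → C(X, ℝ), (∀ n, f n ∈ W n) →
          Filter.Tendsto f Filter.atTop (@nhds _ (setOpenTop ℬ) (0 : C(X, ℝ)))) ↔
      (∃ W : ℕ → Set C(X, ℝ), (∀ n, W n ∈ Nbhd0 𝒜) ∧
        ∀ f : ℕ → C(X, ℝ), (∀ n, f n ∈ W n) →
          (0 : C(X, ℝ)) ∈ closure[setOpenTop ℬ] (Set.range f))) ∧
    ((∃ W : ℕ → Set C(X, ℝ), (∀ n, W n ∈ Nbhd0 𝒜) ∧
        ∀ f : ℕ → C(X, ℝ), (∀ n, f n ∈ W n) →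
          (0 : C(X, ℝ)) ∈ closure[setOpenTop ℬ] (Set.range f)) ↔
      (∃ N : Set (Set C(X, ℝ)), N.Countable ∧ N ⊆ Nbhd0 𝒜 ∧
        ∀ V ∈ Nbhd0 ℬ, ∃ U ∈ N, U ⊆ V)) := by
  classical
  -- (i) → (ii)
  have h12 : (∃ W : ℕ → Set C(X, ℝ), (∀ n, W n ∈ Nbhd0 𝒜) ∧
        ∀ f : ℕ → C(X, ℝ), (∀ n, f n ∈ W n) →
          Filter.Tendsto f Filter.atTop (@nhds _ (setOpenTop ℬ) (0 : C(X, ℝ)))) →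
      (∃ W : ℕ → Set C(X, ℝ), (∀ n, W n ∈ Nbhd0 𝒜) ∧
        ∀ f : ℕ → C(X, ℝ), (∀ n, f n ∈ W n) →
          (0 : C(X, ℝ)) ∈ closure[setOpenTop ℬ] (Set.range f)) := by
    rintro ⟨W, hW, hconv⟩
    refine ⟨W, hW, fun f hf => ?_⟩
    letI := setOpenTop ℬ
    rw [mem_closure_iff]
    intro o ho h0o
    have hev : ∀ᶠ n in Filter.atTop, f n ∈ o := hconv f hf (ho.mem_nhds h0o)
    obtain ⟨n, hn⟩ := hev.exists
    exact ⟨f n, hn, mem_range_self n⟩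
  -- (ii) → (iii)
  have h23 : (∃ W : ℕ → Set C(X, ℝ), (∀ n, W n ∈ Nbhd0 𝒜) ∧
        ∀ f : ℕ → C(X, ℝ), (∀ n, f n ∈ W n) →
          (0 : C(X, ℝ)) ∈ closure[setOpenTop ℬ] (Set.range f)) →
      (∃ N : Set (Set C(X, ℝ)), N.Countable ∧ N ⊆ Nbhd0 𝒜 ∧
        ∀ V ∈ Nbhd0 ℬ, ∃ U ∈ N, U ⊆ V) := by
    rintro ⟨W, hW, hcl⟩
    refine ⟨Set.range W, Set.countable_range W, ?_, ?_⟩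
    · rintro U ⟨n, rfl⟩; exact hW n
    · rintro V ⟨hVopen, hV0⟩
      by_contra hcon
      push_neg at hcon
      have hsel : ∀ n, ∃ g, g ∈ W n ∧ g ∉ V := by
        intro n
        have := hcon (W n) ⟨n, rfl⟩
        rw [Set.not_subset] at this
        exact this
      choose f hfW hfV using hsel
      have h0 := hcl f hfW
      letI := setOpenTop ℬ
      rw [mem_closure_iff] at h0
      obtain ⟨g, hgV, n, rfl⟩ := h0 V hVopen hV0
      exact hfV n hgV
  -- (iii) → (i)
  have h31 : (∃ N : Set (Set C(X, ℝ)), N.Countable ∧ N ⊆ Nbhd0 𝒜 ∧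
        ∀ V ∈ Nbhd0 ℬ, ∃ U ∈ N, U ⊆ V) →
      (∃ W : ℕ → Set C(X, ℝ), (∀ n, W n ∈ Nbhd0 𝒜) ∧
        ∀ f : ℕ → C(X, ℝ), (∀ n, f n ∈ W n) →
          Filter.Tendsto f Filter.atTop (@nhds _ (setOpenTop ℬ) (0 : C(X, ℝ)))) := by
    rintro ⟨N, hNc, hNA, hN⟩
    have hNne : N.Nonempty := by
      obtain ⟨U, hU, -⟩ := hN Set.univ ⟨@isOpen_univ _ (setOpenTop ℬ), trivial⟩
      exact ⟨U, hU⟩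
    obtain ⟨e, rfl⟩ := hNc.exists_eq_range hNne
    refine ⟨fun n => ⋂ k ∈ Finset.range (n + 1), e k, ?_, ?_⟩
    · intro n
      constructor
      · letI := setOpenTop 𝒜
        exact isOpen_biInter_finset fun k _ => (hNA ⟨k, rfl⟩).1
      · exact Set.mem_biInter fun k _ => (hNA ⟨k, rfl⟩).2
    · intro f hf
      letI := setOpenTop ℬ
      rw [tendsto_atTop_nhds]
      intro V h0V hVopen
      obtain ⟨U, ⟨k, rfl⟩, hUV⟩ := hN V ⟨hVopen, h0V⟩
      refine ⟨k, fun n hn => hUV ?_⟩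
      have := hf n
      have hk : e k ∈ (fun k => e k) '' (Finset.range (n + 1)) := by
        exact ⟨k, by simpa using Nat.lt_succ_of_le hn, rfl⟩
      exact Set.mem_iInter₂.mp this k (Finset.mem_range.mpr (Nat.lt_succ_of_le hn))
  exact ⟨⟨h12, fun h => h31 (h23 h)⟩, ⟨h23, fun h => h12 (h31 h)⟩⟩
end

section
/- Let X be a T1 topological space and 𝒜,ℬ ⊆ ℘(X), where every member of 𝒜 is a proper subset of X. Consider the generalized point-open game: in round n One picks A_n ∈ 𝒜, Two responds with an open set U_n ⊆ X with A_n ⊆ U_n and U_n ≠ X, and One wins iff every B ∈ ℬ is contained in some U_n. Then One has a winning predetermined strategy (a sequence ⟨A_n : n ∈ ω⟩ in 𝒜 such that One wins against every legal sequence of responses) if and only if there is a countable family {A_n : n ∈ ω} ⊆ 𝒜 such that every B ∈ ℬ is contained in some A_n (i.e., cof(𝒜;ℬ,⊆) ≤ ω). -/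
open Set

/-! Only the first implication needs an argument: if some `B ∈ ℬ` escaped every `p n`, pick
`x_n ∈ B \ p n`; in a T1 space Two may answer `{x_n}ᶜ`, a proper open superset of `p n`, and then
no `U_n` contains `B`. -/

theorem exists_isOpen_ne_univ_superset_not_superset {X : Type*} [TopologicalSpace X] [T1Space X]
    {A B : Set X} (h : ¬B ⊆ A) :
    ∃ U : Set X, (IsOpen U ∧ A ⊆ U ∧ U ≠ univ) ∧ ¬B ⊆ U := by
  obtain ⟨x, hxB, hxA⟩ := not_subset.mp h
  refine ⟨{x}ᶜ, ⟨isOpen_compl_singleton, subset_compl_singleton_iff.mpr hxA, ?_⟩,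
    fun hBU => hBU hxB rfl⟩
  exact ne_univ_iff_exists_notMem _ |>.mpr ⟨x, not_not.mpr rfl⟩

theorem stmt16_general {X : Type*} [TopologicalSpace X] [T1Space X]
    (𝒜 ℬ : Set (Set X)) :
    (∃ p : ℕ → Set X, (∀ n, p n ∈ 𝒜) ∧
      ∀ U : ℕ → Set X, (∀ n, IsOpen (U n) ∧ p n ⊆ U n ∧ U n ≠ univ) →
        ∀ B ∈ ℬ, ∃ n, B ⊆ U n) ↔
    (∃ A : ℕ → Set X, (∀ n, A n ∈ 𝒜) ∧ ∀ B ∈ ℬ, ∃ n, B ⊆ A n) := by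
  refine ⟨fun ⟨p, hp𝒜, hwin⟩ => ⟨p, hp𝒜, fun B hB => ?_⟩,
    fun ⟨A, hA𝒜, hcov⟩ => ⟨A, hA𝒜, fun U hU B hB => ?_⟩⟩
  · by_contra! hescape
    choose U hU hBU using fun n => exists_isOpen_ne_univ_superset_not_superset (hescape n)
    obtain ⟨n, hn⟩ := hwin U hU B hB
    exact hBU n hn
  · obtain ⟨n, hn⟩ := hcov B hB
    exact ⟨n, hn.trans (hU n).2.1⟩

/-- For a T1 space `X` and `𝒜, ℬ ⊆ ℘(X)` with every member of `𝒜` proper,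
in the generalized point-open game (One plays `A_n ∈ 𝒜`, Two responds with a proper open
`U_n ⊇ A_n`, One wins iff every `B ∈ ℬ` is contained in some `U_n`):
One has a winning predetermined strategy iff there is a countable family
`{A_n : n ∈ ω} ⊆ 𝒜` such that every `B ∈ ℬ` is contained in some `A_n`
(i.e. `cof(𝒜; ℬ, ⊆) ≤ ω`). -/
theorem stmt16 {X : Type*} [TopologicalSpace X] [T1Space X]
    (𝒜 ℬ : Set (Set X)) (hproper : ∀ A ∈ 𝒜, A ≠ univ) :
    (∃ p : ℕ → Set X, (∀ n, p n ∈ 𝒜) ∧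
      ∀ U : ℕ → Set X, (∀ n, IsOpen (U n) ∧ p n ⊆ U n ∧ U n ≠ univ) →
        ∀ B ∈ ℬ, ∃ n, B ⊆ U n) ↔
    (∃ A : ℕ → Set X, (∀ n, A n ∈ 𝒜) ∧ ∀ B ∈ ℬ, ∃ n, B ⊆ A n) :=
  stmt16_general 𝒜 ℬ
end

section
/- Let X be a topological space and 𝒜,ℬ ⊆ ℘(X), where every member of 𝒜 is a proper subset of X that is the intersection of countably many open subsets of X (a Gδ set). Consider the generalized point-open game: in round n One picks A_n ∈ 𝒜, Two responds with an open set U_n ⊆ X with A_n ⊆ U_n and U_n ≠ X, and One wins iff every B ∈ ℬ is contained in some U_n. Then the following are equivalent: (i) One has a winning strategy in this game; (ii) there is a countable family ℱ ⊆ 𝒜 with every B ∈ ℬ contained in some member of ℱ (i.e., cof(𝒜;ℬ,⊆) ≤ ω); (iii) One has a winning predetermined strategy in this game. -/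
/-!
If One's moves are Gδ sets, Two may restrict himself to responses from a fixed countable
family of open supersets of each move, whose intersection is that move. Against a winning
strategy `σ` the plays of such a restricted Two form a countable tree, and every `B ∈ ℬ` lies
in One's move at some node of it: otherwise Two could answer every move with a member of the
family not containing `B` (necessarily a proper subset of `X`), producing a lost play. So the
moves of `σ` along the tree form a countable cover. Conversely, a countable cover `⟨A_n⟩`
played in order is a predetermined winning strategy, and a predetermined strategy is a
strategy that ignores Two's moves.
-/

open Set

section

variable {X : Type*} [TopologicalSpace X]

def IsWinningStrategy (σ : List (Set X) → Set X) (ℬ : Set (Set X)) : Prop :=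
  ∀ U : ℕ → Set X,
    (∀ n, IsOpen (U n) ∧ σ (List.ofFn fun i : Fin n => U i) ⊆ U n ∧ U n ≠ univ) →
    ∀ B ∈ ℬ, ∃ n, B ⊆ U n

def IsWinningPredetermined (p : ℕ → Set X) (ℬ : Set (Set X)) : Prop :=
  ∀ U : ℕ → Set X, (∀ n, IsOpen (U n) ∧ p n ⊆ U n ∧ U n ≠ univ) → ∀ B ∈ ℬ, ∃ n, B ⊆ U n

def IsSeqCover (A : ℕ → Set X) (ℬ : Set (Set X)) : Prop :=
  ∀ B ∈ ℬ, ∃ n, B ⊆ A n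

theorem IsSeqCover.isWinningPredetermined {A : ℕ → Set X} {ℬ : Set (Set X)}
    (h : IsSeqCover A ℬ) : IsWinningPredetermined A ℬ := fun _ hU B hB =>
  let ⟨n, hn⟩ := h B hB
  ⟨n, hn.trans (hU n).2.1⟩

theorem IsWinningPredetermined.isWinningStrategy {p : ℕ → Set X} {ℬ : Set (Set X)}
    (h : IsWinningPredetermined p ℬ) : IsWinningStrategy (fun l => p l.length) ℬ :=
  fun U hU => h U fun n => by simpa only [List.length_ofFn] using hU n

/-- The position reached when Two, at each position `l`, answers with some `g l k`; the indices
are listed latest first: `treePosition g [kₘ, …, k₀]` is the position after `m + 1` rounds. -/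
def treePosition (g : List (Set X) → ℕ → Set X) : List ℕ → List (Set X)
  | [] => []
  | k :: s => treePosition g s ++ [g (treePosition g s) k]

theorem exists_subset_treePosition {σ : List (Set X) → Set X} {g : List (Set X) → ℕ → Set X}
    (hg_open : ∀ l k, IsOpen (g l k)) (hσg : ∀ l, σ l = ⋂ k, g l k) {ℬ : Set (Set X)}
    (hwin : IsWinningStrategy σ ℬ) {B : Set X} (hB : B ∈ ℬ) :
    ∃ s, B ⊆ σ (treePosition g s) := by
  by_contra! hnot
  have hescape : ∀ s, ∃ k, ¬ B ⊆ g (treePosition g s) k := by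
    intro s
    by_contra! h
    exact hnot s (hσg _ ▸ subset_iInter h)
  choose k hk using hescape
  let path : ℕ → List ℕ := fun n => Nat.rec [] (fun _ s => k s :: s) n
  let U : ℕ → Set X := fun n => g (treePosition g (path n)) (k (path n))
  have hpath : ∀ n, List.ofFn (fun i : Fin n => U i) = treePosition g (path n) := by
    intro n
    induction n with
    | zero => rfl
    | succ n ih =>
      rw [List.ofFn_succ', List.concat_eq_append]
      simp only [Fin.val_castSucc, Fin.val_last, ih]
      rfl
  have hlegal : ∀ n, IsOpen (U n) ∧ σ (List.ofFn fun i : Fin n => U i) ⊆ U n ∧ U n ≠ univ := by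
    intro n
    refine ⟨hg_open _ _, ?_, fun h => hk (path n) (h ▸ subset_univ B : B ⊆ U n)⟩
    rw [hpath, hσg]
    exact iInter_subset _ _
  obtain ⟨n, hn⟩ := hwin U hlegal B hB
  exact hk (path n) hn

theorem IsWinningStrategy.exists_isSeqCover {σ : List (Set X) → Set X} {ℬ : Set (Set X)}
    (hσ : ∀ l, IsGδ (σ l)) (h : IsWinningStrategy σ ℬ) :
    ∃ P : ℕ → List (Set X), IsSeqCover (fun n => σ (P n)) ℬ := by
  choose g hg_open hσg using fun l => isGδ_iff_eq_iInter_nat.mp (hσ l)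
  refine ⟨fun n => treePosition g (Denumerable.ofNat (List ℕ) n), fun B hB => ?_⟩
  obtain ⟨s, hs⟩ := exists_subset_treePosition hg_open hσg h hB
  exact ⟨Encodable.encode s, by simpa only [Denumerable.ofNat_encode] using hs⟩

end

theorem stmt17_general {X : Type*} [TopologicalSpace X] (𝒜 ℬ : Set (Set X))
    (hGδ : ∀ A ∈ 𝒜, IsGδ A) :
    ((∃ σ : List (Set X) → Set X, (∀ l, σ l ∈ 𝒜) ∧
        ∀ U : ℕ → Set X,
          (∀ n, IsOpen (U n) ∧ σ (List.ofFn fun i : Fin n => U i) ⊆ U n ∧ U n ≠ univ) →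
          ∀ B ∈ ℬ, ∃ n, B ⊆ U n) ↔
      (∃ A : ℕ → Set X, (∀ n, A n ∈ 𝒜) ∧ ∀ B ∈ ℬ, ∃ n, B ⊆ A n)) ∧
    ((∃ A : ℕ → Set X, (∀ n, A n ∈ 𝒜) ∧ ∀ B ∈ ℬ, ∃ n, B ⊆ A n) ↔
      (∃ p : ℕ → Set X, (∀ n, p n ∈ 𝒜) ∧
        ∀ U : ℕ → Set X, (∀ n, IsOpen (U n) ∧ p n ⊆ U n ∧ U n ≠ univ) →
          ∀ B ∈ ℬ, ∃ n, B ⊆ U n)) := by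
  have cover_of_strategy : ∀ σ : List (Set X) → Set X, (∀ l, σ l ∈ 𝒜) →
      IsWinningStrategy σ ℬ → ∃ A : ℕ → Set X, (∀ n, A n ∈ 𝒜) ∧ IsSeqCover A ℬ :=
    fun σ hσ h =>
      let ⟨P, hP⟩ := h.exists_isSeqCover fun l => hGδ _ (hσ l)
      ⟨_, fun n => hσ (P n), hP⟩
  refine ⟨⟨fun ⟨σ, hσ, h⟩ => cover_of_strategy σ hσ h, fun ⟨A, hA, h⟩ => ?_⟩,
    ⟨fun ⟨A, hA, h⟩ => ⟨A, hA, IsSeqCover.isWinningPredetermined h⟩, fun ⟨p, hp, h⟩ =>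
      cover_of_strategy _ (fun l => hp l.length) (IsWinningPredetermined.isWinningStrategy h)⟩⟩
  exact ⟨fun l => A l.length, fun l => hA _,
    (IsSeqCover.isWinningPredetermined h).isWinningStrategy⟩

/-- For a topological space `X` and `𝒜, ℬ ⊆ ℘(X)` with every member of `𝒜`
a proper Gδ subset of `X`, the following are equivalent for the generalized point-open
game (One plays `A_n ∈ 𝒜`, Two responds with a proper open `U_n ⊇ A_n`, One wins iff
every `B ∈ ℬ` is contained in some `U_n`):
(i) One has a winning strategy;
(ii) there is a countable family in `𝒜` such that every `B ∈ ℬ` is contained in some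
member (`cof(𝒜;ℬ,⊆) ≤ ω`);
(iii) One has a winning predetermined strategy.
Stated as (i) ↔ (ii) and (ii) ↔ (iii). -/
theorem stmt17 {X : Type*} [TopologicalSpace X] (𝒜 ℬ : Set (Set X))
    (hproper : ∀ A ∈ 𝒜, A ≠ univ) (hGδ : ∀ A ∈ 𝒜, IsGδ A) :
    ((∃ σ : List (Set X) → Set X, (∀ l, σ l ∈ 𝒜) ∧
        ∀ U : ℕ → Set X,
          (∀ n, IsOpen (U n) ∧ σ (List.ofFn fun i : Fin n => U i) ⊆ U n ∧ U n ≠ univ) →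
          ∀ B ∈ ℬ, ∃ n, B ⊆ U n) ↔
      (∃ A : ℕ → Set X, (∀ n, A n ∈ 𝒜) ∧ ∀ B ∈ ℬ, ∃ n, B ⊆ A n)) ∧
    ((∃ A : ℕ → Set X, (∀ n, A n ∈ 𝒜) ∧ ∀ B ∈ ℬ, ∃ n, B ⊆ A n) ↔
      (∃ p : ℕ → Set X, (∀ n, p n ∈ 𝒜) ∧
        ∀ U : ℕ → Set X, (∀ n, IsOpen (U n) ∧ p n ⊆ U n ∧ U n ≠ univ) →
          ∀ B ∈ ℬ, ∃ n, B ⊆ U n)) :=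
  stmt17_general 𝒜 ℬ hGδ
end

section
/- Let X be a nonempty topological space in which every closed subset is a Gδ set. Let 𝒜 be the family of closed nowhere dense subsets of X and let ℬ = {{x} : x ∈ X}. Consider the game in which in round n One picks a closed nowhere dense set A_n ⊆ X, Two responds with an open set U_n with A_n ⊆ U_n and U_n ≠ X, and One wins iff ⋃_{n∈ω} U_n = X (i.e., every singleton is contained in some U_n). Then One has a winning strategy in this game if and only if X is meager in itself, i.e., X is a countable union of nowhere dense subsets of X. -/
open Set

/-- Let `X` be a nonempty space in which every closed set is Gδ.  In the
game where One plays closed nowhere dense sets `A_n`, Two responds with proper open sets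
`U_n ⊇ A_n`, and One wins iff `⋃ U_n = X`, One has a winning strategy iff `X` is meager
in itself (a countable union of nowhere dense sets). -/
theorem stmt18 {X : Type*} [TopologicalSpace X] [Nonempty X]
    (hGδ : ∀ C : Set X, IsClosed C → IsGδ C) :
    (∃ σ : List (Set X) → Set X,
      (∀ l, IsClosed (σ l) ∧ IsNowhereDense (σ l)) ∧
      ∀ U : ℕ → Set X,
        (∀ n, IsOpen (U n) ∧ σ (List.ofFn fun i : Fin n => U i) ⊆ U n ∧ U n ≠ univ) →
        (⋃ n, U n) = univ) ↔
    (∃ A : ℕ → Set X, (∀ n, IsNowhereDense (A n)) ∧ (⋃ n, A n) = univ) := by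
  constructor
  · rintro ⟨σ, hσ, hwin⟩
    -- for each history, a Gδ representation of σ l
    have hGrep : ∀ l : List (Set X), ∃ G : ℕ → Set X,
        (∀ n, IsOpen (G n)) ∧ σ l = ⋂ n, G n := fun l =>
      ((hGδ _ (hσ l).1).eq_iInter_nat)
    choose G hGopen hGeq using hGrep
    -- each σ l is proper (not univ)
    have hproper : ∀ l, σ l ≠ univ := by
      intro l h
      have := (hσ l).2
      rw [IsNowhereDense, h, closure_univ, interior_univ] at this
      exact (univ_nonempty).ne_empty this
    -- choose a proper open superset W l of σ l
    have hWex : ∀ l : List (Set X), ∃ W : Set X, IsOpen W ∧ σ l ⊆ W ∧ W ≠ univ := by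
      intro l
      obtain ⟨x, hx⟩ : ∃ x, x ∉ σ l := by
        by_contra h
        push_neg at h
        exact hproper l (eq_univ_of_forall h)
      rw [hGeq l, mem_iInter] at hx
      push_neg at hx
      obtain ⟨n, hn⟩ := hx
      refine ⟨G l n, hGopen l n, ?_, ?_⟩
      · rw [hGeq l]; exact iInter_subset _ n
      · intro h; exact hn (h ▸ mem_univ x)
    choose W hWopen hWsub hWne using hWex
    -- Two's candidate moves: for history l and index k
    set mv : List (Set X) → ℕ → Set X := fun l k => G l k ∩ W l with hmv
    have hmvOpen : ∀ l k, IsOpen (mv l k) := fun l k => (hGopen l k).inter (hWopen l)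
    have hmvSub : ∀ l k, σ l ⊆ mv l k := by
      intro l k
      refine subset_inter ?_ (hWsub l)
      rw [hGeq l]; exact iInter_subset _ k
    have hmvNe : ∀ l k, mv l k ≠ univ := by
      intro l k h
      exact hWne l (univ_subset_iff.mp (h ▸ inter_subset_right))
    -- the tree of histories: h' s is the reversed history after playing indices s (reversed)
    let h' : List ℕ → List (Set X) := fun s =>
      s.foldr (fun k acc => (mv acc.reverse k) :: acc) []
    have h'cons : ∀ k s, h' (k :: s) = mv (h' s).reverse k :: h' s := fun k s => rfl
    -- claim: the σ-values along the tree cover X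
    have hcover : (⋃ s : List ℕ, σ (h' s).reverse) = univ := by
      by_contra hne
      obtain ⟨x, hx⟩ : ∃ x, ∀ s : List ℕ, x ∉ σ (h' s).reverse := by
        rcases (ne_univ_iff_exists_notMem _).mp hne with ⟨x, hx⟩
        exact ⟨x, by simpa using hx⟩
      -- choose at each node an index avoiding x
      have hK : ∀ s : List ℕ, ∃ k, x ∉ G (h' s).reverse k := by
        intro s
        have := hx s
        rw [hGeq, mem_iInter] at this
        push_neg at this
        exact this
      choose K hKspec using hK
      -- build the run
      let t : ℕ → List ℕ := fun n => Nat.rec [] (fun _ s => K s :: s) n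
      have ht : ∀ n, t (n + 1) = K (t n) :: t n := fun n => rfl
      set U : ℕ → Set X := fun n => mv (h' (t n)).reverse (K (t n)) with hU
      have hhist : ∀ n, List.ofFn (fun i : Fin n => U i) = (h' (t n)).reverse := by
        intro n
        induction n with
        | zero => rfl
        | succ n ih =>
          rw [List.ofFn_succ']
          have : h' (t (n + 1)) = U n :: h' (t n) := by
            rw [ht, h'cons]
          rw [this, List.reverse_cons, ← ih]
          simp [List.concat_eq_append]
      have hlegal : ∀ n, IsOpen (U n) ∧ σ (List.ofFn fun i : Fin n => U i) ⊆ U n ∧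
          U n ≠ univ := by
        intro n
        rw [hhist n]
        exact ⟨hmvOpen _ _, hmvSub _ _, hmvNe _ _⟩
      have := hwin U hlegal
      have hxU : x ∈ ⋃ n, U n := this ▸ mem_univ x
      obtain ⟨n, hn⟩ := mem_iUnion.mp hxU
      exact (hKspec (t n)) (hn.1)
    -- reindex by ℕ
    obtain ⟨f, hf⟩ := exists_surjective_nat (List ℕ)
    refine ⟨fun n => σ (h' (f n)).reverse, fun n => (hσ _).2, ?_⟩
    rw [eq_univ_iff_forall]
    intro x
    have : x ∈ ⋃ s : List ℕ, σ (h' s).reverse := hcover ▸ mem_univ x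
    obtain ⟨s, hs⟩ := mem_iUnion.mp this
    obtain ⟨n, rfl⟩ := hf s
    exact mem_iUnion.mpr ⟨n, hs⟩
  · rintro ⟨A, hA, hAU⟩
    refine ⟨fun l => closure (A l.length), ?_, ?_⟩
    · intro l
      exact ⟨isClosed_closure, (hA _).closure⟩
    · intro U hU
      rw [eq_univ_iff_forall]
      intro x
      have : x ∈ ⋃ n, A n := hAU ▸ mem_univ x
      obtain ⟨n, hn⟩ := mem_iUnion.mp this
      refine mem_iUnion.mpr ⟨n, (hU n).2.1 ?_⟩
      show x ∈ closure (A (List.ofFn fun i : Fin n => U i).length)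
      have hlen : (List.ofFn fun i : Fin n => U i).length = n := by simp
      rw [hlen]
      exact subset_closure hn
end
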